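/- arXiv:1801.07292 — 11 statements merged into one kernel-verified Lean document; each statement's English description precedes it below -/
import Mathlib

section
/- Let X be a convex subset of a real Banach space and let F : X × X → ℝ satisfy: (A1) F is uniformly α-strongly convex in its second argument (for all x,y,z ∈ X, F(z,x) ≥ F(z,y) + ⟨∇₂F(z,y), x−y⟩ + (α/2)‖x−y‖²); (A2) F is uniformly G₂-Lipschitz in its second argument; (A3) ∇₂F is uniformly β-Lipschitz in its first argument (‖∇₂F(x,z) − ∇₂F(y,z)‖_* ≤ β‖x−y‖ for all x,y,z ∈ X). Set θ = β/α and suppose θ < 1. Let (x_n) be the value-aggregation sequence: x₁ ∈ X and x_{n+1} ∈ argmin_{x∈X} Σ_{k=1}^n F(x_k, x). Then Σ_{n=1}^∞ ‖x_{n+1} − x_n‖ < ∞, and consequently the sequence (x_n) converges. -/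
/-!
Write `Δₙ = ‖xₙ₊₁ - xₙ‖` and `Sₙ = ∑_{j ≤ n} j Δⱼ`. The FTL objective
`Φₙ = ∑_{k ≤ n} F(x_k, ·)` is `nα`-strongly convex and minimised at `xₙ₊₁`, so comparing `Φₙ`
and `Φₙ₊₁` at `xₙ₊₁` and `xₙ₊₂` gives `(2n+1) α/2 Δₙ₊₁² ≤ F(xₙ₊₁, xₙ₊₁) - F(xₙ₊₁, xₙ₊₂)`,
while the `β`-Lipschitz dependence of `∇₂F` on the first argument bounds `n` times the right-hand
side by `β Δₙ₊₁ Sₙ`. Hence `n (2n+1) Δₙ₊₁ ≤ 2θ Sₙ`, so `Sₙ₊₁ ≤ (1 + θ (1/n + O(1/n²))) Sₙ`,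
which gives `Sₙ = O(n^θ)` and `Δₙ₊₁ = O(n^(θ-2))`, summable because `θ < 1`.
-/

open Finset Filter Topology Real

section ConvexAnalysis

variable {E : Type*} [NormedAddCommGroup E] [NormedSpace ℝ E] {s : Set E} {f : E → ℝ} {m : ℝ}

lemma Convex.strongConvexOn_of_forall_add_le (hs : Convex ℝ s) (L : E → E →L[ℝ] ℝ)
    (h : ∀ y ∈ s, ∀ z ∈ s, f y + L y (z - y) + m / 2 * ‖z - y‖ ^ 2 ≤ f z) :
    StrongConvexOn s m f := by
  refine ⟨hs, fun x hx y hy a b ha hb hab => ?_⟩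
  obtain rfl : a = 1 - b := by linarith
  set p := (1 - b) • x + b • y
  have hxp : x - p = b • (x - y) := by module
  have hyp : y - p = -((1 - b) • (x - y)) := by module
  have h1 := h p (hs hx hy ha hb hab) x hx
  have h2 := h p (hs hx hy ha hb hab) y hy
  rw [hxp, map_smul, norm_smul, Real.norm_of_nonneg hb] at h1
  rw [hyp, map_neg, map_smul, norm_neg, norm_smul, Real.norm_of_nonneg ha] at h2
  simp only [smul_eq_mul] at h1 h2 ⊢
  nlinarith [mul_le_mul_of_nonneg_left h1 ha, mul_le_mul_of_nonneg_left h2 hb]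

lemma Convex.strongConvexOn_sum {ι : Type*} (hs : Convex ℝ s) (t : Finset ι) (f : ι → E → ℝ)
    (L : ι → E → E →L[ℝ] ℝ)
    (h : ∀ i ∈ t, ∀ y ∈ s, ∀ z ∈ s, f i y + L i y (z - y) + m / 2 * ‖z - y‖ ^ 2 ≤ f i z) :
    StrongConvexOn s (#t * m) fun z => ∑ i ∈ t, f i z := by
  refine hs.strongConvexOn_of_forall_add_le (fun y => ∑ i ∈ t, L i y) fun y hy z hz => ?_
  have hsum := sum_le_sum fun i hi => h i hi y hy z hz
  rw [sum_add_distrib, sum_add_distrib, sum_const, nsmul_eq_mul] at hsum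
  rw [_root_.sum_apply]
  linarith

lemma StrongConvexOn.add_sq_le_of_isMinOn (hf : StrongConvexOn s m f) {w y : E} (hw : w ∈ s)
    (hmin : IsMinOn f s w) (hy : y ∈ s) : f w + m / 2 * ‖y - w‖ ^ 2 ≤ f y := by
  have hsegment : ∀ b ∈ Set.Ioc (0 : ℝ) 1, f w + (1 - b) * (m / 2 * ‖y - w‖ ^ 2) ≤ f y := by
    rintro b ⟨hb0, hb1⟩
    have hp := hf.1 hw hy (sub_nonneg.2 hb1) hb0.le (sub_add_cancel 1 b)
    have hconv := hf.2 hw hy (sub_nonneg.2 hb1) hb0.le (sub_add_cancel 1 b)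
    have hle := isMinOn_iff.mp hmin _ hp
    rw [norm_sub_rev] at hconv
    simp only [smul_eq_mul] at hconv
    have : b * (f w + (1 - b) * (m / 2 * ‖y - w‖ ^ 2)) ≤ b * f y := by linarith
    exact le_of_mul_le_mul_left this hb0
  have hlim : Tendsto (fun b : ℝ => f w + (1 - b) * (m / 2 * ‖y - w‖ ^ 2)) (𝓝[>] 0)
      (𝓝 (f w + (1 - 0) * (m / 2 * ‖y - w‖ ^ 2))) :=
    (Continuous.tendsto (by fun_prop) 0).mono_left nhdsWithin_le_nhds
  simpa using le_of_tendsto hlim (eventually_of_mem (Ioc_mem_nhdsGT one_pos) hsegment)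

lemma Convex.sub_sub_sub_le_of_norm_fderiv_sub_le (hs : Convex ℝ s) {F : E → E → ℝ}
    {D : E → E → E →L[ℝ] ℝ} {β : ℝ} (hD : ∀ z ∈ s, ∀ y ∈ s, HasFDerivWithinAt (F z) (D z y) s y)
    (hlip : ∀ a ∈ s, ∀ b ∈ s, ∀ z ∈ s, ‖D a z - D b z‖ ≤ β * ‖a - b‖)
    {a b u v : E} (ha : a ∈ s) (hb : b ∈ s) (hu : u ∈ s) (hv : v ∈ s) :
    (F a u - F b u) - (F a v - F b v) ≤ β * ‖a - b‖ * ‖u - v‖ := by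
  have hmv := hs.norm_image_sub_le_of_norm_hasFDerivWithin_le
    (f := fun z => F a z - F b z) (fun z hz => (hD a ha z hz).sub (hD b hb z hz))
    (fun z hz => hlip a ha b hb z hz) hv hu
  exact (le_abs_self _).trans hmv

end ConvexAnalysis

lemma sum_norm_sub_le_sum_mul_norm_sub {G : Type*} [SeminormedAddCommGroup G] (x : ℕ → G)
    (n : ℕ) :
    ∑ k ∈ Icc 1 n, ‖x (n + 1) - x k‖ ≤ ∑ j ∈ Icc 1 n, (j : ℝ) * ‖x (j + 1) - x j‖ := by
  induction n with
  | zero => simp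
  | succ n ih =>
    have htri : ∀ k ∈ Icc 1 n,
        ‖x (n + 1 + 1) - x k‖ ≤ ‖x (n + 1 + 1) - x (n + 1)‖ + ‖x (n + 1) - x k‖ :=
      fun k _ => norm_sub_le_norm_sub_add_norm_sub _ _ _
    have hsum := sum_le_sum htri
    rw [sum_add_distrib, sum_const, Nat.card_Icc, add_tsub_cancel_right, nsmul_eq_mul] at hsum
    rw [sum_Icc_succ_top (by omega), sum_Icc_succ_top (by omega)]
    push_cast
    linarith

section FollowTheLeader

variable {E : Type*} [NormedAddCommGroup E] [NormedSpace ℝ E] {X : Set E} {F : E → E → ℝ}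
  {D2F : E → E → E →L[ℝ] ℝ} {α β : ℝ} {x : ℕ → E}

lemma ftl_sq_norm_succ_sub_le (hX : Convex ℝ X)
    (hA1 : ∀ z ∈ X, ∀ y ∈ X, ∀ x ∈ X, F z x ≥ F z y + D2F z y (x - y) + α / 2 * ‖x - y‖ ^ 2)
    (hmem : ∀ n, 1 ≤ n → x n ∈ X)
    (hftl : ∀ n, 1 ≤ n → ∀ y ∈ X,
      ∑ k ∈ Icc 1 n, F (x k) (x (n + 1)) ≤ ∑ k ∈ Icc 1 n, F (x k) y)
    {n : ℕ} (hn : 1 ≤ n) :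
    (2 * n + 1) * α / 2 * ‖x (n + 2) - x (n + 1)‖ ^ 2 ≤
      F (x (n + 1)) (x (n + 1)) - F (x (n + 1)) (x (n + 2)) := by
  have hcvx : ∀ m, StrongConvexOn X (#(Icc 1 m) * α) fun z => ∑ k ∈ Icc 1 m, F (x k) z :=
    fun m => hX.strongConvexOn_sum _ _ (fun k => D2F (x k))
      fun k hk y hy z hz => hA1 _ (hmem k (mem_Icc.1 hk).1) y hy z hz
  have h1 := (hcvx n).add_sq_le_of_isMinOn (hmem (n + 1) (by omega))
    (isMinOn_iff.2 (hftl n hn)) (hmem (n + 2) (by omega))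
  have h2 := (hcvx (n + 1)).add_sq_le_of_isMinOn (hmem (n + 2) (by omega))
    (isMinOn_iff.2 (hftl (n + 1) (by omega))) (hmem (n + 1) (by omega))
  rw [sum_Icc_succ_top (by omega), sum_Icc_succ_top (by omega), norm_sub_rev] at h2
  simp only [Nat.card_Icc, add_tsub_cancel_right] at h1 h2
  push_cast at h2
  nlinarith

lemma ftl_mul_sub_le (hX : Convex ℝ X)
    (hgrad : ∀ z ∈ X, ∀ y ∈ X, HasFDerivWithinAt (F z) (D2F z y) X y)
    (hA3 : ∀ x ∈ X, ∀ y ∈ X, ∀ z ∈ X, ‖D2F x z - D2F y z‖ ≤ β * ‖x - y‖)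
    (hmem : ∀ n, 1 ≤ n → x n ∈ X)
    (hftl : ∀ n, 1 ≤ n → ∀ y ∈ X,
      ∑ k ∈ Icc 1 n, F (x k) (x (n + 1)) ≤ ∑ k ∈ Icc 1 n, F (x k) y)
    {n : ℕ} (hn : 1 ≤ n) (hβ : 0 ≤ β) :
    n * (F (x (n + 1)) (x (n + 1)) - F (x (n + 1)) (x (n + 2))) ≤
      β * ‖x (n + 2) - x (n + 1)‖ * ∑ j ∈ Icc 1 n, (j : ℝ) * ‖x (j + 1) - x j‖ := by
  have hcross : ∀ k ∈ Icc 1 n,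
      F (x (n + 1)) (x (n + 1)) - F (x (n + 1)) (x (n + 2)) ≤
        (F (x k) (x (n + 1)) - F (x k) (x (n + 2))) +
          β * ‖x (n + 2) - x (n + 1)‖ * ‖x (n + 1) - x k‖ := by
    intro k hk
    have h := hX.sub_sub_sub_le_of_norm_fderiv_sub_le hgrad hA3 (hmem (n + 1) (by omega))
      (hmem k (mem_Icc.1 hk).1) (hmem (n + 1) (by omega)) (hmem (n + 2) (by omega))
    rw [norm_sub_rev (x (n + 1)) (x (n + 2))] at h
    linarith
  have hsum := sum_le_sum hcross
  rw [sum_const, Nat.card_Icc, add_tsub_cancel_right, nsmul_eq_mul, sum_add_distrib,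
    sum_sub_distrib, ← mul_sum] at hsum
  have hmin := hftl n hn (x (n + 2)) (hmem (n + 2) (by omega))
  have htri := mul_le_mul_of_nonneg_left (sum_norm_sub_le_sum_mul_norm_sub x n)
    (mul_nonneg hβ (norm_nonneg (x (n + 2) - x (n + 1))))
  linarith

lemma ftl_norm_succ_sub_le (hX : Convex ℝ X)
    (hgrad : ∀ z ∈ X, ∀ y ∈ X, HasFDerivWithinAt (F z) (D2F z y) X y)
    (hA1 : ∀ z ∈ X, ∀ y ∈ X, ∀ x ∈ X, F z x ≥ F z y + D2F z y (x - y) + α / 2 * ‖x - y‖ ^ 2)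
    (hA3 : ∀ x ∈ X, ∀ y ∈ X, ∀ z ∈ X, ‖D2F x z - D2F y z‖ ≤ β * ‖x - y‖)
    (hmem : ∀ n, 1 ≤ n → x n ∈ X)
    (hftl : ∀ n, 1 ≤ n → ∀ y ∈ X,
      ∑ k ∈ Icc 1 n, F (x k) (x (n + 1)) ≤ ∑ k ∈ Icc 1 n, F (x k) y)
    (hβ : 0 ≤ β) {n : ℕ} (hn : 1 ≤ n) :
    n * (2 * n + 1) * α / 2 * ‖x (n + 2) - x (n + 1)‖ ≤
      β * ∑ j ∈ Icc 1 n, (j : ℝ) * ‖x (j + 1) - x j‖ := by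
  rcases (norm_nonneg (x (n + 2) - x (n + 1))).eq_or_lt with hΔ | hΔ
  · rw [← hΔ, mul_zero]
    exact mul_nonneg hβ (sum_nonneg fun j _ => mul_nonneg j.cast_nonneg (norm_nonneg _))
  · have hsq := mul_le_mul_of_nonneg_left (ftl_sq_norm_succ_sub_le hX hA1 hmem hftl hn)
      (Nat.cast_nonneg (α := ℝ) n)
    have hmul := ftl_mul_sub_le hX hgrad hA3 hmem hftl hn hβ
    refine le_of_mul_le_mul_right ?_ hΔ
    nlinarith

end FollowTheLeader

/-- With `ψ t = log t - 2 / t`, this bounds the growth factor of `Sₙ` by `exp (θ (ψ (n+1) - ψ n))`,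
so that `Sₙ exp (-θ ψ n)` is nonincreasing. -/
lemma two_mul_add_one_div_le_log_sub {t : ℝ} (ht : 0 < t) :
    2 * (t + 1) / (t * (2 * t + 1)) ≤ (log (t + 1) - 2 / (t + 1)) - (log t - 2 / t) := by
  have hlog : 1 / (t + 1) ≤ log (t + 1) - log t := by
    have h := one_sub_inv_le_log_of_pos (show 0 < (t + 1) / t by positivity)
    rwa [log_div (by positivity) ht.ne', inv_div, one_sub_div (by positivity),
      add_sub_cancel_left] at h
  have halg : 2 * (t + 1) / (t * (2 * t + 1)) ≤ 2 / t - 1 / (t + 1) := by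
    rw [div_sub_div _ _ ht.ne' (by positivity), div_le_div_iff₀ (by positivity) (by positivity)]
    nlinarith
  have : 2 / (t + 1) = 2 * (1 / (t + 1)) := by ring
  linarith

section WeightedRecursion

variable {d : ℕ → ℝ} {θ : ℝ}

lemma weightedSum_succ_le_exp_mul (hd : ∀ n, 0 ≤ d n) (hθ : 0 ≤ θ)
    (hrec : ∀ n : ℕ, 1 ≤ n →
      (n : ℝ) * (2 * n + 1) * d (n + 1) ≤ 2 * θ * ∑ j ∈ Icc 1 n, (j : ℝ) * d j)
    {n : ℕ} (hn : 1 ≤ n) :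
    ∑ j ∈ Icc 1 (n + 1), (j : ℝ) * d j ≤
      exp (θ * ((log (n + 1) - 2 / (n + 1)) - (log n - 2 / n))) * ∑ j ∈ Icc 1 n, (j : ℝ) * d j := by
  set S := ∑ j ∈ Icc 1 n, (j : ℝ) * d j
  have hS : 0 ≤ S := sum_nonneg fun j _ => mul_nonneg j.cast_nonneg (hd j)
  have hn' : (0 : ℝ) < n := by exact_mod_cast hn
  set δ := θ * ((log (n + 1) - 2 / (n + 1)) - (log n - 2 / n))
  have hstep : ((n : ℝ) + 1) * d (n + 1) ≤ δ * S :=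
    calc ((n : ℝ) + 1) * d (n + 1) ≤ θ * (2 * (n + 1) / (n * (2 * n + 1))) * S := by
          rw [← mul_div_assoc, div_mul_eq_mul_div, le_div_iff₀ (by positivity)]
          nlinarith [hrec n hn]
      _ ≤ δ * S := mul_le_mul_of_nonneg_right
          (mul_le_mul_of_nonneg_left (two_mul_add_one_div_le_log_sub hn') hθ) hS
  calc ∑ j ∈ Icc 1 (n + 1), (j : ℝ) * d j = S + ((n : ℝ) + 1) * d (n + 1) := by
        rw [sum_Icc_succ_top (by omega)]; push_cast; rfl
    _ ≤ (1 + δ) * S := by linarith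
    _ ≤ exp δ * S := by gcongr; linarith [add_one_le_exp δ]

lemma weightedSum_le_rpow (hd : ∀ n, 0 ≤ d n) (hθ : 0 ≤ θ)
    (hrec : ∀ n : ℕ, 1 ≤ n →
      (n : ℝ) * (2 * n + 1) * d (n + 1) ≤ 2 * θ * ∑ j ∈ Icc 1 n, (j : ℝ) * d j)
    {n : ℕ} (hn : 1 ≤ n) :
    ∑ j ∈ Icc 1 n, (j : ℝ) * d j ≤ d 1 * exp (2 * θ) * (n : ℝ) ^ θ := by
  have hexp : ∀ n : ℕ, 1 ≤ n →
      ∑ j ∈ Icc 1 n, (j : ℝ) * d j ≤ d 1 * exp (θ * ((log n - 2 / n) + 2)) := by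
    intro n hn
    induction n, hn using Nat.le_induction with
    | base => simp
    | succ n hn ih =>
      calc _ ≤ _ := weightedSum_succ_le_exp_mul hd hθ hrec hn
        _ ≤ exp (θ * ((log (n + 1) - 2 / (n + 1)) - (log n - 2 / n))) *
            (d 1 * exp (θ * ((log n - 2 / n) + 2))) := by gcongr
        _ = _ := by rw [mul_left_comm, ← exp_add]; push_cast; ring_nf
  have hn' : (0 : ℝ) < n := by exact_mod_cast hn
  calc _ ≤ d 1 * exp (θ * ((log n - 2 / n) + 2)) := hexp n hn
    _ ≤ d 1 * exp (θ * (log n + 2)) := by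
        gcongr
        · exact hd 1
        · linarith [show 0 ≤ 2 / (n : ℝ) by positivity]
    _ = _ := by rw [rpow_def_of_pos hn', mul_add, exp_add]; ring_nf

theorem summable_of_mul_two_mul_add_one_le (hd : ∀ n, 0 ≤ d n) (hθ0 : 0 ≤ θ) (hθ1 : θ < 1)
    (hrec : ∀ n : ℕ, 1 ≤ n →
      (n : ℝ) * (2 * n + 1) * d (n + 1) ≤ 2 * θ * ∑ j ∈ Icc 1 n, (j : ℝ) * d j) :
    Summable d := by
  set C := θ * (d 1 * exp (2 * θ))
  have hbound : ∀ n, 1 ≤ n → d (n + 1) ≤ C * (n : ℝ) ^ (θ - 2) := by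
    intro n hn
    have hn' : (0 : ℝ) < n := by exact_mod_cast hn
    have hS := weightedSum_le_rpow hd hθ0 hrec hn
    have h := hrec n hn
    rw [rpow_sub hn', rpow_two, mul_div_assoc', le_div_iff₀ (by positivity)]
    nlinarith [mul_le_mul_of_nonneg_left hS hθ0, hd (n + 1)]
  have hs : Summable fun n : ℕ => C * ((n + 1 : ℕ) : ℝ) ^ (θ - 2) :=
    ((summable_nat_add_iff 1).mpr (summable_nat_rpow.mpr (by linarith))).mul_left C
  refine (summable_nat_add_iff 2).mp (hs.of_nonneg_of_le (fun n => hd _) fun n => ?_)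
  exact hbound (n + 1) (by omega)

end WeightedRecursion

theorem stmt_1_general
    {E : Type*} [NormedAddCommGroup E] [NormedSpace ℝ E] [CompleteSpace E]
    (X : Set E) (hX : Convex ℝ X)
    (F : E → E → ℝ) (D2F : E → E → (E →L[ℝ] ℝ))
    (α β θ : ℝ) (hα : 0 < α) (hβ : 0 ≤ β)
    (hgrad : ∀ z ∈ X, ∀ y ∈ X, HasFDerivWithinAt (F z) (D2F z y) X y)
    (hA1 : ∀ z ∈ X, ∀ y ∈ X, ∀ x ∈ X,
      F z x ≥ F z y + D2F z y (x - y) + α / 2 * ‖x - y‖ ^ 2)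
    (hA3 : ∀ x ∈ X, ∀ y ∈ X, ∀ z ∈ X, ‖D2F x z - D2F y z‖ ≤ β * ‖x - y‖)
    (hθ : θ = β / α) (hθ1 : θ < 1)
    (x : ℕ → E) (hmem : ∀ n, 1 ≤ n → x n ∈ X)
    (hftl : ∀ n, 1 ≤ n → ∀ y ∈ X,
      ∑ k ∈ Finset.Icc 1 n, F (x k) (x (n + 1)) ≤ ∑ k ∈ Finset.Icc 1 n, F (x k) y) :
    Summable (fun n : ℕ => ‖x (n + 1) - x n‖) ∧
      ∃ l : E, Filter.Tendsto x Filter.atTop (nhds l) := by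
  have hθ0 : 0 ≤ θ := hθ ▸ div_nonneg hβ hα.le
  have hrec : ∀ n : ℕ, 1 ≤ n → (n : ℝ) * (2 * n + 1) * ‖x (n + 1 + 1) - x (n + 1)‖ ≤
      2 * θ * ∑ j ∈ Icc 1 n, (j : ℝ) * ‖x (j + 1) - x j‖ := by
    intro n hn
    have h := ftl_norm_succ_sub_le hX hgrad hA1 hA3 hmem hftl hβ hn
    rw [hθ, mul_div_assoc', div_mul_eq_mul_div, le_div_iff₀ hα]
    linarith
  have hsum := summable_of_mul_two_mul_add_one_le (d := fun n => ‖x (n + 1) - x n‖)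
    (fun n => norm_nonneg _) hθ0 hθ1 hrec
  refine ⟨hsum, cauchySeq_tendsto_of_complete (cauchySeq_of_summable_dist ?_)⟩
  simpa only [dist_eq_norm, norm_sub_rev] using hsum

/-- Convergence of the value-aggregation sequence when `θ < 1`.
`X` is a convex subset of a real Banach space.  Under uniform `α`-strong convexity in
the second argument, uniform `G₂`-Lipschitzness in the second argument, and uniform
`β`-Lipschitzness of `∇₂F` in the first argument, with `θ = β/α < 1`, the
Follow-the-Leader sequence has summable consecutive increments and hence converges. -/
theorem stmt_1
    {E : Type*} [NormedAddCommGroup E] [NormedSpace ℝ E] [CompleteSpace E]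
    (X : Set E) (hX : Convex ℝ X)
    (F : E → E → ℝ) (D2F : E → E → (E →L[ℝ] ℝ))
    (α G₂ β θ : ℝ) (hα : 0 < α) (hG₂ : 0 < G₂) (hβ : 0 ≤ β)
    (hgrad : ∀ z ∈ X, ∀ y ∈ X, HasFDerivWithinAt (F z) (D2F z y) X y)
    (hA1 : ∀ z ∈ X, ∀ y ∈ X, ∀ x ∈ X,
      F z x ≥ F z y + D2F z y (x - y) + α / 2 * ‖x - y‖ ^ 2)
    (hA2 : ∀ z ∈ X, ∀ x ∈ X, ∀ y ∈ X, |F z x - F z y| ≤ G₂ * ‖x - y‖)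
    (hA3 : ∀ x ∈ X, ∀ y ∈ X, ∀ z ∈ X, ‖D2F x z - D2F y z‖ ≤ β * ‖x - y‖)
    (hθ : θ = β / α) (hθ1 : θ < 1)
    (x : ℕ → E) (hmem : ∀ n, 1 ≤ n → x n ∈ X)
    (hftl : ∀ n, 1 ≤ n → ∀ y ∈ X,
      ∑ k ∈ Finset.Icc 1 n, F (x k) (x (n + 1)) ≤ ∑ k ∈ Finset.Icc 1 n, F (x k) y) :
    Summable (fun n : ℕ => ‖x (n + 1) - x n‖) ∧
      ∃ l : E, Filter.Tendsto x Filter.atTop (nhds l) :=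
  stmt_1_general X hX F D2F α β θ hα hβ hgrad hA1 hA3 hθ hθ1 x hmem hftl
end

section
/- Let X be a convex subset of a real normed vector space and let F : X × X → ℝ satisfy: (A1) F is uniformly α-strongly convex in its second argument (for all x,y,z ∈ X, F(z,x) ≥ F(z,y) + ⟨∇₂F(z,y), x−y⟩ + (α/2)‖x−y‖²); (A2) F is uniformly G₂-Lipschitz in its second argument. Let (x_n) be the value-aggregation sequence: x₁ ∈ X and x_{n+1} ∈ argmin_{x∈X} Σ_{k=1}^n F(x_k, x), and write f_n(x) = F(x_n, x). Then for all N ≥ 1: min_{1 ≤ n ≤ N} F(x_n, x_n) ≤ (1/N) Σ_{n=1}^N f_n(x_n) ≤ inf_{x∈X} (1/N) Σ_{n=1}^N f_n(x) + (G₂²/(2α)) · (ln N + 1)/N. -/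
open Filter Finset Topology

/-!
Write `S_n = cumulativeLoss f n = f_1 + ⋯ + f_n`, so that `x_{n+1}` minimises `S_n` on `X`.
Telescoping gives `∑_{t ≤ N} f_t(x_t) = S_N(x_{N+1}) + ∑_{t ≤ N} (S_t(x_t) - S_t(x_{t+1}))`, and
`S_N(x_{N+1}) ≤ S_N(y)` for every `y ∈ X`. Each difference is at most `G²/(2αt)`: `S_t` is
`tα`-strongly convex, and in the direction `v = x_{t+1} - x_t` its derivative at `x_t` is
`S_{t-1}'(x_t) v + f_t'(x_t) v`, where `S_{t-1}'(x_t) v ≥ 0` by first-order optimality of `x_t`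
for `S_{t-1}` and `f_t'(x_t) v ≥ -G‖v‖` by the Lipschitz bound. Hence the difference is at most
`G‖v‖ - tα‖v‖²/2 ≤ G²/(2tα)`, and the harmonic sum `∑ 1/t ≤ log N + 1` finishes the bound.
-/

section FirstOrder

variable {E : Type*} [NormedAddCommGroup E] [NormedSpace ℝ E] {X : Set E}
  {f : E → ℝ} {f' : E →L[ℝ] ℝ} {y z : E}

theorem HasFDerivWithinAt.abs_apply_sub_le_of_lipschitz (hf : HasFDerivWithinAt f f' X y)
    (hX : Convex ℝ X) (hy : y ∈ X) (hz : z ∈ X) {G : ℝ}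
    (hlip : ∀ w ∈ X, |f w - f y| ≤ G * ‖w - y‖) : |f' (z - y)| ≤ G * ‖z - y‖ := by
  have hdir : Tendsto (fun t : ℝ => t • (z - y)) (𝓝[>] 0) (𝓝 0) := by
    simpa using ((tendsto_id (x := 𝓝 (0 : ℝ))).mono_left nhdsWithin_le_nhds).smul_const (z - y)
  have hmem : ∀ᶠ t in 𝓝[>] (0 : ℝ), y + t • (z - y) ∈ X := by
    filter_upwards [Ioo_mem_nhdsGT one_pos] with t ht
    exact hX.add_smul_sub_mem hy hz ⟨ht.1.le, ht.2.le⟩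
  have hscale : Tendsto (fun t : ℝ => t⁻¹ • t • (z - y)) (𝓝[>] 0) (𝓝 (z - y)) := by
    refine tendsto_const_nhds.congr' ?_
    filter_upwards [self_mem_nhdsWithin] with t ht
    exact (inv_smul_smul₀ (ne_of_gt ht) _).symm
  refine le_of_tendsto (hf.lim hdir hmem hscale).abs ?_
  filter_upwards [self_mem_nhdsWithin, hmem] with t (ht : 0 < t) htX
  calc |t⁻¹ • (f (y + t • (z - y)) - f y)| = t⁻¹ * |f (y + t • (z - y)) - f y| := by
        rw [smul_eq_mul, abs_mul, _root_.abs_of_pos (inv_pos.mpr ht)]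
    _ ≤ t⁻¹ * (G * ‖y + t • (z - y) - y‖) := by gcongr; exact hlip _ htX
    _ = G * ‖z - y‖ := by
        rw [add_sub_cancel_left, norm_smul, Real.norm_of_nonneg ht.le]; field_simp

theorem sub_le_sq_div_of_isMinOn_add {g h : E → ℝ} {g' h' : E →L[ℝ] ℝ} {c G : ℝ}
    (hX : Convex ℝ X) (hc : 0 < c) (hy : y ∈ X) (hz : z ∈ X)
    (hg : HasFDerivWithinAt g g' X y) (hmin : IsMinOn g X y)
    (hh : HasFDerivWithinAt h h' X y) (hlip : ∀ w ∈ X, |h w - h y| ≤ G * ‖w - y‖)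
    (hconv : g y + h y + (g' + h') (z - y) + c / 2 * ‖z - y‖ ^ 2 ≤ g z + h z) :
    g y + h y - (g z + h z) ≤ G ^ 2 / (2 * c) := by
  have hg' : 0 ≤ g' (z - y) := hmin.localize.hasFDerivWithinAt_nonneg hg
    (sub_mem_posTangentConeAt_of_segment_subset (hX.segment_subset hy hz))
  have hh' : -(G * ‖z - y‖) ≤ h' (z - y) :=
    neg_le_of_abs_le (hh.abs_apply_sub_le_of_lipschitz hX hy hz hlip)
  rw [add_apply] at hconv
  rw [le_div_iff₀ (by positivity)]
  nlinarith [sq_nonneg (c * ‖z - y‖ - G)]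

end FirstOrder

theorem Finset.inf'_le_one_div_card_mul_sum {ι K : Type*} [Field K] [LinearOrder K]
    [IsStrictOrderedRing K] (s : Finset ι) (hs : s.Nonempty) (f : ι → K) : s.inf' hs f ≤ 1 / #s * ∑ i ∈ s, f i := by
  rw [one_div_mul_eq_div, ← expect_eq_sum_div_card]
  exact le_expect hs fun i hi => inf'_le f hi

theorem sum_Icc_inv_le_log_add_one (N : ℕ) : ∑ t ∈ Icc 1 N, (1 / t : ℝ) ≤ Real.log N + 1 := by
  have := harmonic_le_one_add_log N
  rw [harmonic_eq_sum_Icc] at this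
  push_cast at this
  simpa [add_comm] using this

def cumulativeLoss {α : Type*} (f : ℕ → α → ℝ) (n : ℕ) (y : α) : ℝ :=
  ∑ k ∈ Icc 1 n, f k y

namespace cumulativeLoss

variable {α : Type*} (f : ℕ → α → ℝ)

@[simp]
theorem zero : cumulativeLoss f 0 = 0 := by
  ext; simp [cumulativeLoss]

theorem succ (n : ℕ) (y : α) :
    cumulativeLoss f (n + 1) y = cumulativeLoss f n y + f (n + 1) y :=
  sum_Icc_succ_top (Nat.le_add_left 1 n) _

theorem sum_sub_cumulativeLoss_eq_sum (x : ℕ → α) (N : ℕ) :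
    ∑ t ∈ Icc 1 N, f t (x t) - cumulativeLoss f N (x (N + 1)) =
      ∑ t ∈ Icc 1 N, (cumulativeLoss f t (x t) - cumulativeLoss f t (x (t + 1))) := by
  induction N with
  | zero => simp
  | succ N ih =>
    rw [sum_Icc_succ_top (Nat.le_add_left 1 N), sum_Icc_succ_top (Nat.le_add_left 1 N),
      ← ih, succ f N (x (N + 1))]
    ring

end cumulativeLoss

section FollowTheLeader

variable {E : Type*} [NormedAddCommGroup E] [NormedSpace ℝ E] {X : Set E}
  {f : ℕ → E → ℝ} {f' : ℕ → E → E →L[ℝ] ℝ} {α G : ℝ}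

theorem cumulativeLoss_succ_sub_le (hX : Convex ℝ X) (hα : 0 < α)
    (hf : ∀ k ≥ 1, ∀ y ∈ X, HasFDerivWithinAt (f k) (f' k y) X y)
    (hconv : ∀ k ≥ 1, ∀ y ∈ X, ∀ w ∈ X, f k y + f' k y (w - y) + α / 2 * ‖w - y‖ ^ 2 ≤ f k w)
    (hlip : ∀ k ≥ 1, ∀ w ∈ X, ∀ y ∈ X, |f k w - f k y| ≤ G * ‖w - y‖)
    {m : ℕ} {y w : E} (hy : y ∈ X) (hw : w ∈ X) (hmin : IsMinOn (cumulativeLoss f m) X y) :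
    cumulativeLoss f (m + 1) y - cumulativeLoss f (m + 1) w ≤ G ^ 2 / (2 * (α * (m + 1))) := by
  have hderiv : HasFDerivWithinAt (cumulativeLoss f m) (∑ k ∈ Icc 1 m, f' k y) X y :=
    HasFDerivWithinAt.fun_sum fun k hk => hf k (mem_Icc.mp hk).1 y hy
  have hsum := sum_le_sum fun k (hk : k ∈ Icc 1 (m + 1)) => hconv k (mem_Icc.mp hk).1 y hy w hw
  simp only [sum_add_distrib, sum_const, Nat.card_Icc, Nat.add_sub_cancel, nsmul_eq_mul,
    ← _root_.sum_apply, sum_Icc_succ_top (Nat.le_add_left 1 m)] at hsum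
  rw [cumulativeLoss.succ, cumulativeLoss.succ]
  refine sub_le_sq_div_of_isMinOn_add hX (by positivity) hy hw hderiv hmin
    (hf _ (Nat.le_add_left 1 m) y hy) (fun v hv => hlip _ (Nat.le_add_left 1 m) v hv y hy) ?_
  rw [add_apply]
  unfold cumulativeLoss
  linarith

theorem sum_le_cumulativeLoss_add_log (hX : Convex ℝ X) (hα : 0 < α)
    (hf : ∀ k ≥ 1, ∀ y ∈ X, HasFDerivWithinAt (f k) (f' k y) X y)
    (hconv : ∀ k ≥ 1, ∀ y ∈ X, ∀ w ∈ X, f k y + f' k y (w - y) + α / 2 * ‖w - y‖ ^ 2 ≤ f k w)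
    (hlip : ∀ k ≥ 1, ∀ w ∈ X, ∀ y ∈ X, |f k w - f k y| ≤ G * ‖w - y‖)
    {x : ℕ → E} (hx : ∀ n ≥ 1, x n ∈ X) (hmin : ∀ n, IsMinOn (cumulativeLoss f n) X (x (n + 1)))
    (N : ℕ) {y : E} (hy : y ∈ X) :
    ∑ t ∈ Icc 1 N, f t (x t) ≤ cumulativeLoss f N y + G ^ 2 / (2 * α) * (Real.log N + 1) := by
  have hstep : ∀ t ∈ Icc 1 N, cumulativeLoss f t (x t) - cumulativeLoss f t (x (t + 1)) ≤
      G ^ 2 / (2 * α) * (1 / t) := by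
    intro t ht
    obtain ⟨m, rfl⟩ := Nat.exists_eq_add_of_le' (mem_Icc.mp ht).1
    have h := cumulativeLoss_succ_sub_le hX hα hf hconv hlip (hx _ (Nat.le_add_left 1 m))
      (hx _ (Nat.le_add_left 1 (m + 1))) (hmin m)
    convert h using 1
    push_cast
    field_simp
  calc ∑ t ∈ Icc 1 N, f t (x t)
      = cumulativeLoss f N (x (N + 1)) +
          ∑ t ∈ Icc 1 N, (cumulativeLoss f t (x t) - cumulativeLoss f t (x (t + 1))) := by
        rw [← cumulativeLoss.sum_sub_cumulativeLoss_eq_sum]; ring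
    _ ≤ cumulativeLoss f N y + ∑ t ∈ Icc 1 N, G ^ 2 / (2 * α) * (1 / t) :=
        add_le_add (isMinOn_iff.mp (hmin N) y hy) (sum_le_sum hstep)
    _ ≤ cumulativeLoss f N y + G ^ 2 / (2 * α) * (Real.log N + 1) := by
        rw [← mul_sum]
        gcongr
        exact sum_Icc_inv_le_log_add_one N

end FollowTheLeader

theorem stmt_2_general
    {E : Type*} [NormedAddCommGroup E] [NormedSpace ℝ E]
    (X : Set E) (hX : Convex ℝ X)
    (F : E → E → ℝ) (D2F : E → E → (E →L[ℝ] ℝ))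
    (α G₂ : ℝ) (hα : 0 < α)
    (hgrad : ∀ z ∈ X, ∀ y ∈ X, HasFDerivWithinAt (F z) (D2F z y) X y)
    (hA1 : ∀ z ∈ X, ∀ y ∈ X, ∀ x ∈ X,
      F z x ≥ F z y + D2F z y (x - y) + α / 2 * ‖x - y‖ ^ 2)
    (hA2 : ∀ z ∈ X, ∀ x ∈ X, ∀ y ∈ X, |F z x - F z y| ≤ G₂ * ‖x - y‖)
    (x : ℕ → E) (hmem : ∀ n, 1 ≤ n → x n ∈ X)
    (hftl : ∀ n, 1 ≤ n → ∀ y ∈ X,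
      ∑ k ∈ Finset.Icc 1 n, F (x k) (x (n + 1)) ≤ ∑ k ∈ Finset.Icc 1 n, F (x k) y)
    (N : ℕ) (hN : 1 ≤ N) :
    (Finset.Icc 1 N).inf' (Finset.nonempty_Icc.mpr hN) (fun n => F (x n) (x n)) ≤
        (1 / (N : ℝ)) * ∑ n ∈ Finset.Icc 1 N, F (x n) (x n) ∧
    (1 / (N : ℝ)) * ∑ n ∈ Finset.Icc 1 N, F (x n) (x n) ≤
        sInf ((fun y => (1 / (N : ℝ)) * ∑ n ∈ Finset.Icc 1 N, F (x n) y) '' X) +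
          G₂ ^ 2 / (2 * α) * (Real.log N + 1) / N := by
  set f : ℕ → E → ℝ := fun k => F (x k)
  have hmin : ∀ n, IsMinOn (cumulativeLoss f n) X (x (n + 1)) := by
    rintro (_ | n)
    · simp [isMinOn_iff]
    · exact isMinOn_iff.mpr (hftl (n + 1) (Nat.le_add_left 1 n))
  have hregret : ∀ y ∈ X, ∑ n ∈ Icc 1 N, F (x n) (x n) ≤
      cumulativeLoss f N y + G₂ ^ 2 / (2 * α) * (Real.log N + 1) :=
    fun y hy => sum_le_cumulativeLoss_add_log (f' := fun k => D2F (x k)) hX hα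
      (fun k hk => hgrad _ (hmem k hk)) (fun k hk => hA1 _ (hmem k hk))
      (fun k hk => hA2 _ (hmem k hk)) hmem hmin N hy
  refine ⟨by simpa only [Nat.card_Icc, Nat.add_sub_cancel] using
    (Icc 1 N).inf'_le_one_div_card_mul_sum (nonempty_Icc.mpr hN) (fun n => F (x n) (x n)), ?_⟩
  rw [← sub_le_iff_le_add]
  refine le_csInf ⟨_, Set.mem_image_of_mem _ (hmem 1 le_rfl)⟩ ?_
  rintro _ ⟨y, hy, rfl⟩
  calc 1 / (N : ℝ) * ∑ n ∈ Icc 1 N, F (x n) (x n) - G₂ ^ 2 / (2 * α) * (Real.log N + 1) / N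
      = 1 / (N : ℝ) * (∑ n ∈ Icc 1 N, F (x n) (x n) - G₂ ^ 2 / (2 * α) * (Real.log N + 1)) := by
        ring
    _ ≤ 1 / (N : ℝ) * cumulativeLoss f N y := by
        gcongr
        linarith [hregret y hy]

/-- Classical guarantee for value aggregation, Theorem 1 of the paper.
Under uniform `α`-strong convexity and uniform `G₂`-Lipschitzness of `F` in its second
argument, the Follow-the-Leader sequence satisfies
`min_{1 ≤ n ≤ N} F(x_n, x_n) ≤ (1/N) Σ f_n(x_n) ≤ inf_X (1/N) Σ f_n + (G₂²/(2α))(ln N + 1)/N`. -/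
theorem stmt_2
    {E : Type*} [NormedAddCommGroup E] [NormedSpace ℝ E]
    (X : Set E) (hX : Convex ℝ X)
    (F : E → E → ℝ) (D2F : E → E → (E →L[ℝ] ℝ))
    (α G₂ : ℝ) (hα : 0 < α) (hG₂ : 0 < G₂)
    (hgrad : ∀ z ∈ X, ∀ y ∈ X, HasFDerivWithinAt (F z) (D2F z y) X y)
    (hA1 : ∀ z ∈ X, ∀ y ∈ X, ∀ x ∈ X,
      F z x ≥ F z y + D2F z y (x - y) + α / 2 * ‖x - y‖ ^ 2)
    (hA2 : ∀ z ∈ X, ∀ x ∈ X, ∀ y ∈ X, |F z x - F z y| ≤ G₂ * ‖x - y‖)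
    (x : ℕ → E) (hmem : ∀ n, 1 ≤ n → x n ∈ X)
    (hftl : ∀ n, 1 ≤ n → ∀ y ∈ X,
      ∑ k ∈ Finset.Icc 1 n, F (x k) (x (n + 1)) ≤ ∑ k ∈ Finset.Icc 1 n, F (x k) y)
    (N : ℕ) (hN : 1 ≤ N) :
    (Finset.Icc 1 N).inf' (Finset.nonempty_Icc.mpr hN) (fun n => F (x n) (x n)) ≤
        (1 / (N : ℝ)) * ∑ n ∈ Finset.Icc 1 N, F (x n) (x n) ∧
    (1 / (N : ℝ)) * ∑ n ∈ Finset.Icc 1 N, F (x n) (x n) ≤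
        sInf ((fun y => (1 / (N : ℝ)) * ∑ n ∈ Finset.Icc 1 N, F (x n) y) '' X) +
          G₂ ^ 2 / (2 * α) * (Real.log N + 1) / N :=
  stmt_2_general X hX F D2F α G₂ hα hgrad hA1 hA2 x hmem hftl N hN
end

section
/- Let X be a convex subset of a real normed vector space and let F : X × X → ℝ satisfy: (A1) F is uniformly α-strongly convex in its second argument (for all x,y,z ∈ X, F(z,x) ≥ F(z,y) + ⟨∇₂F(z,y), x−y⟩ + (α/2)‖x−y‖²); (A3) ∇₂F is uniformly β-Lipschitz in its first argument (‖∇₂F(x,z) − ∇₂F(y,z)‖_* ≤ β‖x−y‖ for all x,y,z ∈ X). Set θ = β/α. Let (x_n) be the value-aggregation sequence: x₁ ∈ X and x_{n+1} ∈ argmin_{x∈X} Σ_{k=1}^n F(x_k, x), and for n ≥ 2 define S_n = (Σ_{k=1}^{n−1} ‖x_n − x_k‖)/(n−1). Then for all n ≥ 2, ‖x_{n+1} − x_n‖ ≤ θ S_n / n. -/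
/-!
Both first-order optimality conditions are used: that of `x (n+1)` for the first `n` losses,
tested against `x n`, and that of `x n` for the first `n - 1` losses, tested against `x (n+1)`.
Summing the strong monotonicity of the gradients `D2F (x k)` over `k ≤ n` turns the first one into
`n α ‖d‖² ≤ -∑_{k ≤ n} D2F (x k) (x n) d` with `d = x (n+1) - x n`. The second one says that the
part `k < n` of this sum is nonnegative, and Lipschitz continuity in the first argument compares
each of its terms with the last one, `D2F (x n) (x n) d`, up to `β ‖x n - x k‖ ‖d‖`; averaging
gives `n α ‖d‖² ≤ β S_n ‖d‖`.
-/

open Finset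

section

variable {E : Type*} [NormedAddCommGroup E] [NormedSpace ℝ E]

theorem IsMinOn.hasFDerivWithinAt_sub_nonneg_of_convex {f : E → ℝ} {f' : E →L[ℝ] ℝ}
    {s : Set E} {a y : E} (hs : Convex ℝ s) (hmin : IsMinOn f s a)
    (hf : HasFDerivWithinAt f f' s a) (ha : a ∈ s) (hy : y ∈ s) : 0 ≤ f' (y - a) :=
  hmin.localize.hasFDerivWithinAt_nonneg hf
    (sub_mem_posTangentConeAt_of_segment_subset (hs.segment_subset ha hy))

theorem strongMonotone_of_strongConvex {f : E → ℝ} {f' : E → E →L[ℝ] ℝ} {s : Set E} {α : ℝ}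
    (hf : ∀ y ∈ s, ∀ x ∈ s, f x ≥ f y + f' y (x - y) + α / 2 * ‖x - y‖ ^ 2)
    {x y : E} (hx : x ∈ s) (hy : y ∈ s) :
    α * ‖x - y‖ ^ 2 ≤ f' x (x - y) - f' y (x - y) := by
  have hxy := hf y hy x hx
  have hyx := hf x hx y hy
  rw [← neg_sub x y, map_neg, norm_neg] at hyx
  linarith

theorem sum_apply_sub_le_of_norm_sub_le {ι : Type*} {s : Finset ι} {A : ι → E →L[ℝ] ℝ}
    {B : E →L[ℝ] ℝ} {r : ι → ℝ} (h : ∀ i ∈ s, ‖A i - B‖ ≤ r i) (d : E) :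
    ∑ i ∈ s, (A i d - B d) ≤ (∑ i ∈ s, r i) * ‖d‖ := by
  rw [sum_mul]
  refine sum_le_sum fun i hi => ?_
  calc A i d - B d = (A i - B) d := rfl
    _ ≤ ‖(A i - B) d‖ := Real.le_norm_self _
    _ ≤ ‖A i - B‖ * ‖d‖ := (A i - B).le_opNorm d
    _ ≤ r i * ‖d‖ := mul_le_mul_of_nonneg_right (h i hi) (norm_nonneg d)

theorem le_div_of_mul_sq_le_mul {a b t : ℝ} (ha : 0 < a) (hb : 0 ≤ b) (ht : 0 ≤ t)
    (h : a * t ^ 2 ≤ b * t) : t ≤ b / a := by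
  rw [le_div_iff₀ ha]
  rcases ht.eq_or_lt with rfl | ht
  · simpa using hb
  · nlinarith

end

section FollowTheLeader

variable {E : Type*} [NormedAddCommGroup E] [NormedSpace ℝ E]
  {X : Set E} {F : E → E → ℝ} {D2F : E → E → E →L[ℝ] ℝ} {x : ℕ → E}

theorem ftl_sum_apply_sub_nonneg (hX : Convex ℝ X)
    (hgrad : ∀ z ∈ X, ∀ y ∈ X, HasFDerivWithinAt (F z) (D2F z y) X y)
    (hmem : ∀ n, 1 ≤ n → x n ∈ X)
    (hftl : ∀ n, 1 ≤ n → ∀ y ∈ X,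
      ∑ k ∈ Icc 1 n, F (x k) (x (n + 1)) ≤ ∑ k ∈ Icc 1 n, F (x k) y)
    {m : ℕ} (hm : 1 ≤ m) {y : E} (hy : y ∈ X) :
    0 ≤ ∑ k ∈ Icc 1 m, D2F (x k) (x (m + 1)) (y - x (m + 1)) := by
  have hxm : x (m + 1) ∈ X := hmem (m + 1) (by omega)
  have hder : HasFDerivWithinAt (fun z => ∑ k ∈ Icc 1 m, F (x k) z)
      (∑ k ∈ Icc 1 m, D2F (x k) (x (m + 1))) X (x (m + 1)) :=
    HasFDerivWithinAt.fun_sum fun k hk => hgrad _ (hmem k (mem_Icc.mp hk).1) _ hxm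
  have hmin : IsMinOn (fun z => ∑ k ∈ Icc 1 m, F (x k) z) X (x (m + 1)) :=
    isMinOn_iff.mpr (hftl m hm)
  simpa only [_root_.sum_apply] using
    hmin.hasFDerivWithinAt_sub_nonneg_of_convex hX hder hxm hy

theorem ftl_mul_sq_norm_step_le (hX : Convex ℝ X)
    (hgrad : ∀ z ∈ X, ∀ y ∈ X, HasFDerivWithinAt (F z) (D2F z y) X y)
    {α : ℝ} (hA1 : ∀ z ∈ X, ∀ y ∈ X, ∀ x ∈ X,
      F z x ≥ F z y + D2F z y (x - y) + α / 2 * ‖x - y‖ ^ 2)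
    (hmem : ∀ n, 1 ≤ n → x n ∈ X)
    (hftl : ∀ n, 1 ≤ n → ∀ y ∈ X,
      ∑ k ∈ Icc 1 n, F (x k) (x (n + 1)) ≤ ∑ k ∈ Icc 1 n, F (x k) y)
    {n : ℕ} (hn : 1 ≤ n) :
    n * α * ‖x (n + 1) - x n‖ ^ 2 ≤ -∑ k ∈ Icc 1 n, D2F (x k) (x n) (x (n + 1) - x n) := by
  have hopt := ftl_sum_apply_sub_nonneg hX hgrad hmem hftl hn (hmem n hn)
  rw [← neg_sub] at hopt
  simp only [map_neg, sum_neg_distrib, neg_nonneg] at hopt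
  have hmono : ∑ _k ∈ Icc 1 n, α * ‖x (n + 1) - x n‖ ^ 2 ≤
      ∑ k ∈ Icc 1 n, (D2F (x k) (x (n + 1)) (x (n + 1) - x n) -
        D2F (x k) (x n) (x (n + 1) - x n)) :=
    sum_le_sum fun k hk => strongMonotone_of_strongConvex
      (hA1 _ (hmem k (mem_Icc.mp hk).1)) (hmem (n + 1) (by omega)) (hmem n hn)
  rw [sum_const, Nat.card_Icc, Nat.add_sub_cancel, nsmul_eq_mul, sum_sub_distrib] at hmono
  linarith

theorem ftl_mul_sq_norm_step_le_mul_avg (hX : Convex ℝ X)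
    (hgrad : ∀ z ∈ X, ∀ y ∈ X, HasFDerivWithinAt (F z) (D2F z y) X y)
    {α β : ℝ} (hA1 : ∀ z ∈ X, ∀ y ∈ X, ∀ x ∈ X,
      F z x ≥ F z y + D2F z y (x - y) + α / 2 * ‖x - y‖ ^ 2)
    (hA3 : ∀ x ∈ X, ∀ y ∈ X, ∀ z ∈ X, ‖D2F x z - D2F y z‖ ≤ β * ‖x - y‖)
    (hmem : ∀ n, 1 ≤ n → x n ∈ X)
    (hftl : ∀ n, 1 ≤ n → ∀ y ∈ X,
      ∑ k ∈ Icc 1 n, F (x k) (x (n + 1)) ≤ ∑ k ∈ Icc 1 n, F (x k) y)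
    {n : ℕ} (hn : 2 ≤ n) :
    n * α * ‖x (n + 1) - x n‖ ^ 2 ≤
      β * ((∑ k ∈ Icc 1 (n - 1), ‖x n - x k‖) / ((n : ℝ) - 1)) * ‖x (n + 1) - x n‖ := by
  set d := x (n + 1) - x n
  set L := ∑ k ∈ Icc 1 (n - 1), ‖x n - x k‖
  have hxn : x n ∈ X := hmem n (by omega)
  have hstep := ftl_mul_sq_norm_step_le hX hgrad hA1 hmem hftl (n := n) (by omega)
  have hprev : 0 ≤ ∑ k ∈ Icc 1 (n - 1), D2F (x k) (x n) d := by
    simpa only [Nat.sub_add_cancel (by omega : 1 ≤ n)] using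
      ftl_sum_apply_sub_nonneg hX hgrad hmem hftl (m := n - 1) (by omega) (hmem (n + 1) (by omega))
  have hsplit : ∑ k ∈ Icc 1 n, D2F (x k) (x n) d =
      ∑ k ∈ Icc 1 (n - 1), D2F (x k) (x n) d + D2F (x n) (x n) d := by
    conv_lhs => rw [← Nat.sub_add_cancel (by omega : 1 ≤ n)]
    rw [sum_Icc_succ_top (by omega), Nat.sub_add_cancel (by omega : 1 ≤ n)]
  have hlip : ∑ k ∈ Icc 1 (n - 1), (D2F (x k) (x n) d - D2F (x n) (x n) d) ≤ β * L * ‖d‖ := by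
    rw [mul_sum]
    refine sum_apply_sub_le_of_norm_sub_le (fun k hk => ?_) d
    rw [norm_sub_rev (x n)]
    exact hA3 _ (hmem k (mem_Icc.mp hk).1) _ hxn _ hxn
  rw [sum_sub_distrib, sum_const, Nat.card_Icc, Nat.add_sub_cancel, nsmul_eq_mul,
    Nat.cast_sub (by omega : 1 ≤ n), Nat.cast_one] at hlip
  have hn1 : (0 : ℝ) < n - 1 := by
    have : (2 : ℝ) ≤ n := by exact_mod_cast hn
    linarith
  rw [mul_div_assoc', div_mul_eq_mul_div, le_div_iff₀ hn1]
  nlinarith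

end FollowTheLeader

/-- Lemma: bound on consecutive iterates.
Under uniform `α`-strong convexity of `F` in the second argument and uniform
`β`-Lipschitzness of `∇₂F` in the first argument, with `θ = β/α`, the
Follow-the-Leader iterates satisfy `‖x_{n+1} − x_n‖ ≤ θ S_n / n` for `n ≥ 2`,
where `S_n = (Σ_{k=1}^{n−1} ‖x_n − x_k‖)/(n−1)`. -/
theorem stmt_4
    {E : Type*} [NormedAddCommGroup E] [NormedSpace ℝ E]
    (X : Set E) (hX : Convex ℝ X)
    (F : E → E → ℝ) (D2F : E → E → (E →L[ℝ] ℝ))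
    (α β θ : ℝ) (hα : 0 < α) (hβ : 0 ≤ β) (hθ : θ = β / α)
    (hgrad : ∀ z ∈ X, ∀ y ∈ X, HasFDerivWithinAt (F z) (D2F z y) X y)
    (hA1 : ∀ z ∈ X, ∀ y ∈ X, ∀ x ∈ X,
      F z x ≥ F z y + D2F z y (x - y) + α / 2 * ‖x - y‖ ^ 2)
    (hA3 : ∀ x ∈ X, ∀ y ∈ X, ∀ z ∈ X, ‖D2F x z - D2F y z‖ ≤ β * ‖x - y‖)
    (x : ℕ → E) (hmem : ∀ n, 1 ≤ n → x n ∈ X)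
    (hftl : ∀ n, 1 ≤ n → ∀ y ∈ X,
      ∑ k ∈ Finset.Icc 1 n, F (x k) (x (n + 1)) ≤ ∑ k ∈ Finset.Icc 1 n, F (x k) y)
    (S : ℕ → ℝ)
    (hS : ∀ n, 2 ≤ n →
      S n = (∑ k ∈ Finset.Icc 1 (n - 1), ‖x n - x k‖) / ((n : ℝ) - 1)) :
    ∀ n, 2 ≤ n → ‖x (n + 1) - x n‖ ≤ θ * S n / n := by
  intro n hn
  have hn2 : (2 : ℝ) ≤ n := by exact_mod_cast hn
  have hS0 : 0 ≤ S n := by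
    rw [hS n hn]
    exact div_nonneg (sum_nonneg fun _ _ => norm_nonneg _) (by linarith)
  have hkey := ftl_mul_sq_norm_step_le_mul_avg hX hgrad hA1 hA3 hmem hftl hn
  rw [← hS n hn] at hkey
  calc ‖x (n + 1) - x n‖ ≤ β * S n / (n * α) :=
        le_div_of_mul_sq_le_mul (mul_pos (by linarith) hα) (by positivity) (norm_nonneg _) hkey
    _ = θ * S n / n := by rw [hθ]; field_simp
end

section
/- Let X be a convex subset of a real normed vector space and let F : X × X → ℝ satisfy (A1) uniform α-strong convexity in the second argument and (A3) uniform β-Lipschitz continuity of ∇₂F in the first argument; set θ = β/α. Let (x_n) be the value-aggregation sequence: x₁ ∈ X and x_{n+1} ∈ argmin_{x∈X} Σ_{k=1}^n F(x_k, x), and define S_n = (Σ_{k=1}^{n−1} ‖x_n − x_k‖)/(n−1) for n ≥ 2. Then for all n ≥ 2, S_{n+1} ≤ (1 − (1−θ)/n) S_n. -/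
/-!
Write `δ = ‖x_{n+1} - x_n‖` and `σ = ∑_{k<n} ‖x_n - x_k‖`. The first-order optimality conditions
of `x_n` and `x_{n+1}` for their cumulative losses, tested in the direction `x_{n+1} - x_n`, combine
with the strong monotonicity of `∇₂F(z, ·)` given by (A1) and the Lipschitz bound (A3), taken at
the common point `x_n`, into `n (n - 1) α δ² ≤ β δ σ`, i.e. `n (n - 1) δ ≤ θ σ`. By the triangle
inequality `n S_{n+1} ≤ σ + n δ`, and the recursion follows since `σ = (n - 1) S_n`.
-/

open Finset

section

variable {E : Type*} [NormedAddCommGroup E]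

theorem sum_norm_sub_le_sum_norm_sub_add_card_mul {ι : Type*} (s : Finset ι) (z : ι → E)
    (a b : E) : ∑ i ∈ s, ‖b - z i‖ ≤ ∑ i ∈ s, ‖a - z i‖ + #s * ‖b - a‖ := by
  calc ∑ i ∈ s, ‖b - z i‖ ≤ ∑ i ∈ s, (‖a - z i‖ + ‖b - a‖) :=
        sum_le_sum fun i _ ↦ by linarith [norm_sub_le_norm_sub_add_norm_sub b a (z i)]
    _ = ∑ i ∈ s, ‖a - z i‖ + #s * ‖b - a‖ := by
        rw [sum_add_distrib, sum_const, nsmul_eq_mul]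

variable [NormedSpace ℝ E] {X : Set E}

theorem Convex.hasFDerivWithinAt_nonneg_of_isMinOn (hX : Convex ℝ X) {f : E → ℝ}
    {f' : E →L[ℝ] ℝ} {a y : E} (ha : a ∈ X) (hy : y ∈ X) (hmin : IsMinOn f X a)
    (hf : HasFDerivWithinAt f f' X a) : 0 ≤ f' (y - a) :=
  hmin.localize.hasFDerivWithinAt_nonneg hf
    (sub_mem_posTangentConeAt_of_segment_subset (hX.segment_subset ha hy))

theorem strongMonotone_of_quadratic_lower_bound {f : E → ℝ} {f' : E → E →L[ℝ] ℝ} {α : ℝ}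
    (hf : ∀ y ∈ X, ∀ x ∈ X, f x ≥ f y + f' y (x - y) + α / 2 * ‖x - y‖ ^ 2)
    {a b : E} (ha : a ∈ X) (hb : b ∈ X) :
    f' a (b - a) + α * ‖b - a‖ ^ 2 ≤ f' b (b - a) := by
  have h₁ := hf a ha b hb
  have h₂ := hf b hb a ha
  rw [← neg_sub b a, map_neg, norm_neg] at h₂
  linarith

theorem ContinuousLinearMap.apply_le_apply_add_of_norm_sub_le {L L' : E →L[ℝ] ℝ} {r : ℝ}
    (h : ‖L - L'‖ ≤ r) (v : E) : L v ≤ L' v + r * ‖v‖ := by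
  have := ((L - L').le_opNorm v).trans (mul_le_mul_of_nonneg_right h (norm_nonneg v))
  rw [sub_apply, Real.norm_eq_abs] at this
  linarith [le_abs_self (L v - L' v)]

variable {F : E → E → ℝ} {D2F : E → E → E →L[ℝ] ℝ} {α β : ℝ}

theorem card_mul_succ_mul_sq_norm_sub_le_of_isMinOn {ι : Type*} (hX : Convex ℝ X)
    (hgrad : ∀ z ∈ X, ∀ y ∈ X, HasFDerivWithinAt (F z) (D2F z y) X y)
    (hA1 : ∀ z ∈ X, ∀ y ∈ X, ∀ x ∈ X,
      F z x ≥ F z y + D2F z y (x - y) + α / 2 * ‖x - y‖ ^ 2)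
    (hA3 : ∀ x ∈ X, ∀ y ∈ X, ∀ z ∈ X, ‖D2F x z - D2F y z‖ ≤ β * ‖x - y‖)
    {s : Finset ι} {z : ι → E} (hz : ∀ i ∈ s, z i ∈ X) {a b : E} (ha : a ∈ X) (hb : b ∈ X)
    (ha_min : IsMinOn (fun y ↦ ∑ i ∈ s, F (z i) y) X a)
    (hb_min : IsMinOn (fun y ↦ ∑ i ∈ s, F (z i) y + F a y) X b) :
    #s * (#s + 1) * α * ‖b - a‖ ^ 2 ≤ β * ‖b - a‖ * ∑ i ∈ s, ‖a - z i‖ := by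
  set v := b - a
  set c : ℝ := (#s : ℝ)
  have hc : 0 ≤ c := Nat.cast_nonneg _
  have opt_a : 0 ≤ ∑ i ∈ s, D2F (z i) a v := by
    simpa only [_root_.sum_apply] using hX.hasFDerivWithinAt_nonneg_of_isMinOn ha hb
      ha_min (HasFDerivWithinAt.fun_sum fun i hi ↦ hgrad _ (hz i hi) a ha)
  have opt_b : ∑ i ∈ s, D2F (z i) b v + D2F a b v ≤ 0 := by
    have := hX.hasFDerivWithinAt_nonneg_of_isMinOn hb ha hb_min
      ((HasFDerivWithinAt.fun_sum fun i hi ↦ hgrad _ (hz i hi) b hb).add (hgrad a ha b hb))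
    rw [← neg_sub b a, map_neg, add_apply, _root_.sum_apply] at this
    linarith
  have mono_sum : ∑ i ∈ s, D2F (z i) a v + c * (α * ‖v‖ ^ 2) ≤ ∑ i ∈ s, D2F (z i) b v := by
    calc ∑ i ∈ s, D2F (z i) a v + c * (α * ‖v‖ ^ 2)
        = ∑ i ∈ s, (D2F (z i) a v + α * ‖v‖ ^ 2) := by
          rw [sum_add_distrib, sum_const, nsmul_eq_mul]
      _ ≤ _ := sum_le_sum fun i hi ↦
          strongMonotone_of_quadratic_lower_bound (hA1 _ (hz i hi)) ha hb
  have mono_a := strongMonotone_of_quadratic_lower_bound (hA1 a ha) ha hb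
  have lip_sum : ∑ i ∈ s, D2F (z i) a v ≤ c * D2F a a v + β * ‖v‖ * ∑ i ∈ s, ‖a - z i‖ := by
    calc ∑ i ∈ s, D2F (z i) a v ≤ ∑ i ∈ s, (D2F a a v + β * ‖v‖ * ‖a - z i‖) :=
          sum_le_sum fun i hi ↦ by
            have := (D2F (z i) a).apply_le_apply_add_of_norm_sub_le
              (hA3 _ (hz i hi) a ha a ha) v
            rw [norm_sub_rev] at this
            linarith
      _ = _ := by rw [sum_add_distrib, sum_const, nsmul_eq_mul, mul_sum]
  have hsum : ∑ i ∈ s, D2F (z i) a v + D2F a a v + (c + 1) * (α * ‖v‖ ^ 2) ≤ 0 := by linarith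
  linarith [mul_le_mul_of_nonneg_left hsum hc, mul_nonneg (by positivity : 0 ≤ c + 1) opt_a]

theorem mul_succ_mul_norm_succ_sub_le (hX : Convex ℝ X)
    (hgrad : ∀ z ∈ X, ∀ y ∈ X, HasFDerivWithinAt (F z) (D2F z y) X y)
    (hA1 : ∀ z ∈ X, ∀ y ∈ X, ∀ x ∈ X,
      F z x ≥ F z y + D2F z y (x - y) + α / 2 * ‖x - y‖ ^ 2)
    (hA3 : ∀ x ∈ X, ∀ y ∈ X, ∀ z ∈ X, ‖D2F x z - D2F y z‖ ≤ β * ‖x - y‖)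
    (hα : 0 < α) (hβ : 0 ≤ β) {x : ℕ → E} (hmem : ∀ n, 1 ≤ n → x n ∈ X)
    (hftl : ∀ n, 1 ≤ n → ∀ y ∈ X,
      ∑ k ∈ Icc 1 n, F (x k) (x (n + 1)) ≤ ∑ k ∈ Icc 1 n, F (x k) y)
    {m : ℕ} (hm : 1 ≤ m) :
    m * (m + 1) * ‖x (m + 2) - x (m + 1)‖ ≤ β / α * ∑ k ∈ Icc 1 m, ‖x (m + 1) - x k‖ := by
  have hb_min : IsMinOn (fun y ↦ ∑ k ∈ Icc 1 m, F (x k) y + F (x (m + 1)) y) X (x (m + 2)) :=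
    fun y hy ↦ by
      have := hftl (m + 1) (by omega) y hy
      simp only [sum_Icc_succ_top (by omega : 1 ≤ m + 1)] at this
      exact this
  have h := card_mul_succ_mul_sq_norm_sub_le_of_isMinOn hX hgrad hA1 hA3 (s := Icc 1 m)
    (fun k hk ↦ hmem k (mem_Icc.1 hk).1) (hmem _ (by omega)) (hmem _ (by omega))
    (hftl m hm) hb_min
  simp only [Nat.card_Icc, add_tsub_cancel_right] at h
  rcases (norm_nonneg (x (m + 2) - x (m + 1))).eq_or_lt with hδ | hδ
  · rw [← hδ, mul_zero]
    exact mul_nonneg (div_nonneg hβ hα.le) (sum_nonneg fun _ _ ↦ norm_nonneg _)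
  · rw [div_mul_eq_mul_div, le_div_iff₀ hα]
    nlinarith

end

/-- One-step recursion for the concentration quantity `S_n`.
Under (A1) uniform `α`-strong convexity in the second argument and (A3) uniform
`β`-Lipschitzness of `∇₂F` in the first argument, with `θ = β/α`, the
Follow-the-Leader iterates satisfy `S_{n+1} ≤ (1 − (1−θ)/n) S_n` for all `n ≥ 2`. -/
theorem stmt_6
    {E : Type*} [NormedAddCommGroup E] [NormedSpace ℝ E]
    (X : Set E) (hX : Convex ℝ X)
    (F : E → E → ℝ) (D2F : E → E → (E →L[ℝ] ℝ))
    (α β θ : ℝ) (hα : 0 < α) (hβ : 0 ≤ β) (hθ : θ = β / α)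
    (hgrad : ∀ z ∈ X, ∀ y ∈ X, HasFDerivWithinAt (F z) (D2F z y) X y)
    (hA1 : ∀ z ∈ X, ∀ y ∈ X, ∀ x ∈ X,
      F z x ≥ F z y + D2F z y (x - y) + α / 2 * ‖x - y‖ ^ 2)
    (hA3 : ∀ x ∈ X, ∀ y ∈ X, ∀ z ∈ X, ‖D2F x z - D2F y z‖ ≤ β * ‖x - y‖)
    (x : ℕ → E) (hmem : ∀ n, 1 ≤ n → x n ∈ X)
    (hftl : ∀ n, 1 ≤ n → ∀ y ∈ X,
      ∑ k ∈ Finset.Icc 1 n, F (x k) (x (n + 1)) ≤ ∑ k ∈ Finset.Icc 1 n, F (x k) y)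
    (S : ℕ → ℝ)
    (hS : ∀ n, 2 ≤ n →
      S n = (∑ k ∈ Finset.Icc 1 (n - 1), ‖x n - x k‖) / ((n : ℝ) - 1)) :
    ∀ n, 2 ≤ n → S (n + 1) ≤ (1 - (1 - θ) / (n : ℝ)) * S n := by
  intro n hn
  obtain ⟨m, rfl⟩ : ∃ m, n = m + 1 := ⟨n - 1, by omega⟩
  have hm : (0 : ℝ) < m := by exact_mod_cast (by omega : 0 < m)
  have hstep := mul_succ_mul_norm_succ_sub_le hX hgrad hA1 hA3 hα hβ hmem hftl (by omega : 1 ≤ m)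
  rw [← hθ] at hstep
  have htri := sum_norm_sub_le_sum_norm_sub_add_card_mul (Icc 1 (m + 1)) x (x (m + 1)) (x (m + 2))
  rw [sum_Icc_succ_top (by omega) (fun k ↦ ‖x (m + 1) - x k‖), sub_self, norm_zero, add_zero,
    Nat.card_Icc] at htri
  rw [hS _ (by omega), hS _ hn]
  simp only [add_tsub_cancel_right, Nat.cast_add, Nat.cast_one] at htri ⊢
  set σ := ∑ k ∈ Icc 1 m, ‖x (m + 1) - x k‖
  have hδ : (m + 1) * ‖x (m + 2) - x (m + 1)‖ ≤ θ * σ / m := by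
    rw [le_div_iff₀ hm]; linarith
  calc _ ≤ (σ + θ * σ / m) / (m + 1) := by
        gcongr
        linarith
    _ = _ := by
        field_simp
        ring
end

section
/- Let X be a convex subset of a real normed vector space and let F : X × X → ℝ satisfy (A1) uniform α-strong convexity in the second argument, (A2) uniform G₂-Lipschitz continuity in the second argument, and (A3) uniform β-Lipschitz continuity of ∇₂F in the first argument; set θ = β/α and suppose θ < 1. Let (x_n) be the value-aggregation sequence: x₁ ∈ X and x_{n+1} ∈ argmin_{x∈X} Σ_{k=1}^n F(x_k, x). For integers n > m ≥ 1 define S_{m:n} = (Σ_{k=m}^{n−1} ‖x_n − x_k‖)/(n−m). Then there exists a constant C > 0, depending only on θ, α, and G₂, such that for all n > m ≥ 2, S_{m:n} ≤ C ( θ/((n−m) m^{2−θ}) + 1/n^{1−θ} ). -/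
universe u

/-!
Comparing the minimizer `x (p + 1)` of `Φₚ = ∑_{k ≤ p} F (x k) ·` with the minimizer `x (p + 2)`
of `Φₚ + F (x (p + 1)) ·` through strong convexity (A1) and the Lipschitz dependence (A3) of `∇₂F`
on its first argument gives the step recursion
`(p + 1) p ‖x (p + 2) - x (p + 1)‖ ≤ θ ∑_{k ≤ p} ‖x (p + 1) - x k‖`.
A strongly convex Lipschitz function forces `diam X ≤ 4 G₂ / α`; this starts a strong induction
showing `‖x (j + 1) - x j‖ ≤ (4 G₂ / α) j ^ (θ - 2)`, and telescoping then gives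
`∑_{m ≤ k < n} ‖x n - x k‖ ≤ (8 G₂ / (α θ)) (n - m) n ^ (θ - 1)`. When `θ = 0` the recursion makes
the sequence constant from `x 2` on.
-/

open Finset Real

lemma sub_one_add_mul_rpow_le {θ : ℝ} (h0 : 0 ≤ θ) (h1 : θ ≤ 1) {t : ℝ} (ht : 0 < t) :
    (t - 1 + θ) * t ^ (θ - 1) ≤ t * (t + 1) ^ (θ - 1) := by
  rcases le_or_gt (t - 1 + θ) 0 with hneg | hpos
  · exact (mul_nonpos_of_nonpos_of_nonneg hneg (by positivity)).trans (by positivity)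
  set a := 1 - θ
  have hbern : (1 + 1 / t) ^ a ≤ 1 + a * (1 / t) :=
    rpow_one_add_le_one_add_mul_self (by linarith [one_div_pos.2 ht]) (by linarith) (by linarith)
  have hsplit : (t + 1) ^ a = t ^ a * (1 + 1 / t) ^ a := by
    rw [← mul_rpow ht.le (by positivity)]
    congr 1
    field_simp
  have hta : 0 < t ^ a := by positivity
  rw [show θ - 1 = -a by ring, rpow_neg ht.le, rpow_neg (by linarith), ← div_eq_mul_inv,
    ← div_eq_mul_inv, div_le_div_iff₀ hta (by positivity), hsplit]
  calc (t - 1 + θ) * (t ^ a * (1 + 1 / t) ^ a)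
      ≤ (t - 1 + θ) * (t ^ a * (1 + a * (1 / t))) := by gcongr
    _ = t ^ a * (t - a ^ 2 / t) := by field_simp; ring
    _ ≤ t * t ^ a := by nlinarith [div_nonneg (sq_nonneg a) ht.le]

lemma mul_sum_Ico_rpow_le {θ : ℝ} (h0 : 0 ≤ θ) (h1 : θ ≤ 1) (p : ℕ) :
    θ * ∑ j ∈ Ico 1 (p + 1), (j : ℝ) ^ (θ - 1) ≤ p * ((p : ℝ) + 1) ^ (θ - 1) := by
  induction p with
  | zero => simp
  | succ p ih =>
    rw [sum_Ico_succ_top (by omega), mul_add]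
    push_cast
    calc θ * ∑ j ∈ Ico 1 (p + 1), (j : ℝ) ^ (θ - 1) + θ * ((p : ℝ) + 1) ^ (θ - 1)
        ≤ p * ((p : ℝ) + 1) ^ (θ - 1) + θ * ((p : ℝ) + 1) ^ (θ - 1) := by gcongr
      _ = ((p : ℝ) + 1 - 1 + θ) * ((p : ℝ) + 1) ^ (θ - 1) := by ring
      _ ≤ ((p : ℝ) + 1) * ((p : ℝ) + 1 + 1) ^ (θ - 1) :=
        sub_one_add_mul_rpow_le h0 h1 (by positivity)

lemma sum_Ico_rpow_le {θ : ℝ} (h0 : 0 < θ) (h1 : θ ≤ 1) {m n : ℕ} (hm : 1 ≤ m) (hmn : m < n) :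
    ∑ j ∈ Ico m n, (j : ℝ) ^ (θ - 1) ≤ 2 / θ * ((n : ℝ) - m) * (n : ℝ) ^ (θ - 1) := by
  have hn : (0 : ℝ) < n := by exact_mod_cast (by omega : 0 < n)
  rw [div_mul_eq_mul_div, div_mul_eq_mul_div, le_div_iff₀ h0, mul_comm]
  rcases le_or_gt n (2 * m) with hsmall | hlarge
  · -- on `[m, n)` every term is at most twice the last one, since `j ≥ n / 2`
    have hterm : ∀ j ∈ Ico m n, (j : ℝ) ^ (θ - 1) ≤ 2 * (n : ℝ) ^ (θ - 1) := by
      intro j hjmem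
      obtain ⟨hmj, hjn⟩ := mem_Ico.1 hjmem
      have hj : (0 : ℝ) < j := by exact_mod_cast (by omega : 0 < j)
      have h2j : (n : ℝ) ≤ 2 * j := by exact_mod_cast (by omega : n ≤ 2 * j)
      have : (j : ℝ) ^ θ ≤ (n : ℝ) ^ θ := by gcongr
      rw [rpow_sub_one hj.ne', rpow_sub_one hn.ne', mul_div_assoc', div_le_div_iff₀ hj hn]
      nlinarith [rpow_nonneg hj.le θ]
    calc θ * ∑ j ∈ Ico m n, (j : ℝ) ^ (θ - 1)
        ≤ 1 * ∑ j ∈ Ico m n, 2 * (n : ℝ) ^ (θ - 1) := by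
          gcongr with j hj
          exact hterm j hj
      _ = 2 * ((n : ℝ) - m) * (n : ℝ) ^ (θ - 1) := by
          rw [sum_const, Nat.card_Ico, nsmul_eq_mul, Nat.cast_sub hmn.le]; ring
  · have hsub : Ico m n ⊆ Ico 1 (n - 1 + 1) := by
      intro j hj; simp only [mem_Ico] at hj ⊢; omega
    calc θ * ∑ j ∈ Ico m n, (j : ℝ) ^ (θ - 1)
        ≤ θ * ∑ j ∈ Ico 1 (n - 1 + 1), (j : ℝ) ^ (θ - 1) := by gcongr
      _ ≤ ((n - 1 : ℕ) : ℝ) * (((n - 1 : ℕ) : ℝ) + 1) ^ (θ - 1) := mul_sum_Ico_rpow_le h0.le h1 _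
      _ ≤ 2 * ((n : ℝ) - m) * (n : ℝ) ^ (θ - 1) := by
          have h2m : 2 * (m : ℝ) < n := by exact_mod_cast hlarge
          rw [Nat.cast_sub (by omega), Nat.cast_one, sub_add_cancel]
          gcongr
          linarith

lemma div_sub_le_of_le_mul_rpow {θ C s : ℝ} {m n : ℕ} (hθ : 0 ≤ θ) (hC : 0 ≤ C) (hmn : m < n)
    (hs : s ≤ C * ((n : ℝ) - m) * (n : ℝ) ^ (θ - 1)) :
    s / ((n : ℝ) - m) ≤ C * (θ / (((n : ℝ) - m) * (m : ℝ) ^ (2 - θ)) + 1 / (n : ℝ) ^ (1 - θ)) := by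
  have hnm : (0 : ℝ) < n - m := sub_pos.2 (by exact_mod_cast hmn)
  have hn : (0 : ℝ) ≤ n := n.cast_nonneg
  rw [div_le_iff₀ hnm]
  calc s ≤ C * (1 / (n : ℝ) ^ (1 - θ)) * ((n : ℝ) - m) := by
        rw [one_div, ← rpow_neg hn, neg_sub]; linarith
    _ ≤ _ := by gcongr; exact le_add_of_nonneg_left (by positivity)

section Sequences

variable {E : Type*} [SeminormedAddCommGroup E]

lemma sum_Ico_norm_sub_le (x : ℕ → E) {m n : ℕ} (hm : 1 ≤ m) (hmn : m ≤ n) :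
    ∑ k ∈ Ico m n, ‖x n - x k‖ ≤ ∑ j ∈ Ico m n, (j : ℝ) * ‖x (j + 1) - x j‖ := by
  induction n, hmn using Nat.le_induction with
  | base => simp
  | succ n hmn ih =>
    have hcard : ((n - m : ℕ) : ℝ) + 1 ≤ n := by
      rw [Nat.cast_sub hmn]; linarith [show (1 : ℝ) ≤ m by exact_mod_cast hm]
    rw [sum_Ico_succ_top hmn, sum_Ico_succ_top hmn]
    calc ∑ k ∈ Ico m n, ‖x (n + 1) - x k‖ + ‖x (n + 1) - x n‖
        ≤ ∑ k ∈ Ico m n, (‖x (n + 1) - x n‖ + ‖x n - x k‖) + ‖x (n + 1) - x n‖ := by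
          gcongr with k; exact norm_sub_le_norm_sub_add_norm_sub _ _ _
      _ = ∑ k ∈ Ico m n, ‖x n - x k‖ + (((n - m : ℕ) : ℝ) + 1) * ‖x (n + 1) - x n‖ := by
          rw [sum_add_distrib, sum_const, Nat.card_Ico, nsmul_eq_mul]; ring
      _ ≤ ∑ j ∈ Ico m n, (j : ℝ) * ‖x (j + 1) - x j‖ + n * ‖x (n + 1) - x n‖ := by
          gcongr

lemma sum_Ico_norm_sub_le_of_le_rpow (x : ℕ → E) {m n : ℕ} {D θ : ℝ} (hm : 1 ≤ m)
    (hmn : m ≤ n) (he : ∀ j ∈ Ico m n, ‖x (j + 1) - x j‖ ≤ D * (j : ℝ) ^ (θ - 2)) :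
    ∑ k ∈ Ico m n, ‖x n - x k‖ ≤ D * ∑ j ∈ Ico m n, (j : ℝ) ^ (θ - 1) := by
  refine (sum_Ico_norm_sub_le x hm hmn).trans ?_
  rw [mul_sum]
  refine sum_le_sum fun j hj ↦ ?_
  have hj0 : (0 : ℝ) < j := by exact_mod_cast (by have := (mem_Ico.1 hj).1; omega : 0 < j)
  calc (j : ℝ) * ‖x (j + 1) - x j‖ ≤ j * (D * (j : ℝ) ^ (θ - 2)) := by gcongr; exact he j hj
    _ = D * (j : ℝ) ^ (θ - 1) := by
      rw [show θ - 1 = θ - 2 + 1 by ring, rpow_add_one hj0.ne']; ring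

lemma norm_succ_sub_le_rpow {θ D : ℝ} (h0 : 0 ≤ θ) (h1 : θ ≤ 1) (x : ℕ → E)
    (hstart : ‖x 2 - x 1‖ ≤ D)
    (hrec : ∀ p : ℕ, 1 ≤ p → ((p : ℝ) + 1) * p * ‖x (p + 2) - x (p + 1)‖ ≤
      θ * ∑ k ∈ Icc 1 p, ‖x (p + 1) - x k‖) :
    ∀ j : ℕ, 1 ≤ j → ‖x (j + 1) - x j‖ ≤ D * (j : ℝ) ^ (θ - 2) := by
  have hD : 0 ≤ D := (norm_nonneg _).trans hstart
  intro j hj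
  induction j using Nat.strong_induction_on with
  | _ j ih =>
  obtain rfl | ⟨p, hp, rfl⟩ : j = 1 ∨ ∃ p, 1 ≤ p ∧ j = p + 1 := by
    rcases j with _ | _ | p <;> simp_all
  · simpa using hstart
  have hsum : ∑ k ∈ Icc 1 p, ‖x (p + 1) - x k‖ ≤ D * ∑ j ∈ Ico 1 (p + 1), (j : ℝ) ^ (θ - 1) := by
    rw [← Ico_add_one_right_eq_Icc]
    exact sum_Ico_norm_sub_le_of_le_rpow x le_rfl (by omega)
      fun j hj ↦ ih j (mem_Ico.1 hj).2 (mem_Ico.1 hj).1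
  have key : ((p : ℝ) + 1) * p * ‖x (p + 2) - x (p + 1)‖ ≤
      ((p : ℝ) + 1) * p * (D * ((p : ℝ) + 1) ^ (θ - 2)) :=
    calc ((p : ℝ) + 1) * p * ‖x (p + 2) - x (p + 1)‖
        ≤ θ * (D * ∑ j ∈ Ico 1 (p + 1), (j : ℝ) ^ (θ - 1)) := (hrec p hp).trans (by gcongr)
      _ = D * (θ * ∑ j ∈ Ico 1 (p + 1), (j : ℝ) ^ (θ - 1)) := by ring
      _ ≤ D * (p * ((p : ℝ) + 1) ^ (θ - 1)) := by grw [mul_sum_Ico_rpow_le h0 h1 p]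
      _ = ((p : ℝ) + 1) * p * (D * ((p : ℝ) + 1) ^ (θ - 2)) := by
        rw [show θ - 1 = θ - 2 + 1 by ring, rpow_add_one (by positivity)]; ring
  push_cast
  exact le_of_mul_le_mul_left key (by positivity)

lemma sum_Ico_norm_sub_le_mul_rpow {θ D : ℝ} (h0 : 0 < θ) (h1 : θ ≤ 1) (x : ℕ → E)
    (hstart : ‖x 2 - x 1‖ ≤ D)
    (hrec : ∀ p : ℕ, 1 ≤ p → ((p : ℝ) + 1) * p * ‖x (p + 2) - x (p + 1)‖ ≤
      θ * ∑ k ∈ Icc 1 p, ‖x (p + 1) - x k‖)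
    {m n : ℕ} (hm : 1 ≤ m) (hmn : m < n) :
    ∑ k ∈ Ico m n, ‖x n - x k‖ ≤ D * (2 / θ) * ((n : ℝ) - m) * (n : ℝ) ^ (θ - 1) := by
  have hstep := norm_succ_sub_le_rpow h0.le h1 x hstart hrec
  have hD : 0 ≤ D := (norm_nonneg _).trans hstart
  calc ∑ k ∈ Ico m n, ‖x n - x k‖ ≤ D * ∑ j ∈ Ico m n, (j : ℝ) ^ (θ - 1) :=
        sum_Ico_norm_sub_le_of_le_rpow x hm hmn.le
          fun j hj ↦ hstep j (hm.trans (mem_Ico.1 hj).1)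
    _ ≤ D * (2 / θ * ((n : ℝ) - m) * (n : ℝ) ^ (θ - 1)) := by
        grw [sum_Ico_rpow_le h0 h1 hm hmn]
    _ = D * (2 / θ) * ((n : ℝ) - m) * (n : ℝ) ^ (θ - 1) := by ring

lemma sum_Ico_norm_sub_eq_zero (x : ℕ → E)
    (hrec : ∀ p : ℕ, 1 ≤ p → ((p : ℝ) + 1) * p * ‖x (p + 2) - x (p + 1)‖ ≤ 0)
    {m n : ℕ} (hm : 2 ≤ m) (hmn : m ≤ n) : ∑ k ∈ Ico m n, ‖x n - x k‖ = 0 := by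
  have hconst (j) (hj : j ∈ Ico m n) : ‖x (j + 1) - x j‖ ≤ 0 * (j : ℝ) ^ ((0 : ℝ) - 2) := by
    obtain ⟨p, rfl⟩ : ∃ p, j = p + 1 := ⟨j - 1, by have := (mem_Ico.1 hj).1; omega⟩
    have hp : 1 ≤ p := by have := (mem_Ico.1 hj).1; omega
    rw [zero_mul]
    exact nonpos_of_mul_nonpos_right (hrec p hp) (mul_pos (by positivity) (by exact_mod_cast hp))
  refine le_antisymm ?_ (sum_nonneg fun _ _ ↦ norm_nonneg _)
  simpa using sum_Ico_norm_sub_le_of_le_rpow x (by omega) hmn hconst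

end Sequences

section StronglyConvex

variable {E : Type*} [NormedAddCommGroup E] [NormedSpace ℝ E] {X : Set E}

lemma norm_sub_le_of_strongConvex_of_lipschitz (hX : Convex ℝ X) {f : E → ℝ}
    {f' : E → E →L[ℝ] ℝ} {α G : ℝ} (hα : 0 < α) (hG : 0 ≤ G)
    (hconv : ∀ y ∈ X, ∀ w ∈ X, f w ≥ f y + f' y (w - y) + α / 2 * ‖w - y‖ ^ 2)
    (hlip : ∀ w ∈ X, ∀ y ∈ X, |f w - f y| ≤ G * ‖w - y‖) {a b : E} (ha : a ∈ X) (hb : b ∈ X) :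
    ‖a - b‖ ≤ 4 * G / α := by
  set u : E := (1 / 2 : ℝ) • a + (1 / 2 : ℝ) • b
  have hu : u ∈ X := hX ha hb (by norm_num) (by norm_num) (by norm_num)
  have hau : a - u = (1 / 2 : ℝ) • (a - b) := by module
  have hbu : b - u = -((1 / 2 : ℝ) • (a - b)) := by module
  have hnorm_au : ‖a - u‖ = ‖a - b‖ / 2 := by rw [hau, norm_smul]; norm_num; ring
  have hnorm_bu : ‖b - u‖ = ‖a - b‖ / 2 := by rw [hbu, norm_neg, norm_smul]; norm_num; ring
  -- the linear terms of the two strong-convexity inequalities at the midpoint cancel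
  have hlin : f' u (a - u) + f' u (b - u) = 0 := by rw [hau, hbu, map_neg]; ring
  have hca := hconv u hu a ha
  have hcb := hconv u hu b hb
  have hla := (abs_le.1 (hlip a ha u hu)).2
  have hlb := (abs_le.1 (hlip b hb u hu)).2
  rw [hnorm_au] at hca hla
  rw [hnorm_bu] at hcb hlb
  have hsq : α * ‖a - b‖ ^ 2 ≤ 4 * G * ‖a - b‖ := by nlinarith
  rw [le_div_iff₀ hα]
  rcases (norm_nonneg (a - b)).eq_or_lt with h | h
  · rw [← h, zero_mul]; linarith
  · nlinarith

lemma IsMinOn.add_mul_sq_le {f : E → ℝ} {f' : E →L[ℝ] ℝ} {u w : E} {μ : ℝ}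
    (hX : Convex ℝ X) (hmin : IsMinOn f X u) (hf : HasFDerivWithinAt f f' X u) (hu : u ∈ X)
    (hw : w ∈ X) (hconv : f u + f' (w - u) + μ / 2 * ‖w - u‖ ^ 2 ≤ f w) :
    f u + μ / 2 * ‖w - u‖ ^ 2 ≤ f w := by
  have : 0 ≤ f' (w - u) := hmin.localize.hasFDerivWithinAt_nonneg hf
    (sub_mem_posTangentConeAt_of_segment_subset (hX.segment_subset hu hw))
  linarith

variable {F : E → E → ℝ} {D2F : E → E → E →L[ℝ] ℝ} {α β : ℝ}

lemma IsMinOn.sum_add_card_mul_sq_le (hX : Convex ℝ X)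
    (hdiff : ∀ z ∈ X, ∀ y ∈ X, HasFDerivWithinAt (F z) (D2F z y) X y)
    (hA1 : ∀ z ∈ X, ∀ y ∈ X, ∀ w ∈ X,
      F z w ≥ F z y + D2F z y (w - y) + α / 2 * ‖w - y‖ ^ 2)
    {ι : Type*} {s : Finset ι} {z : ι → E} (hz : ∀ k ∈ s, z k ∈ X) {u w : E}
    (hmin : IsMinOn (fun y ↦ ∑ k ∈ s, F (z k) y) X u) (hu : u ∈ X) (hw : w ∈ X) :
    ∑ k ∈ s, F (z k) u + #s * α / 2 * ‖w - u‖ ^ 2 ≤ ∑ k ∈ s, F (z k) w := by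
  refine hmin.add_mul_sq_le hX (HasFDerivWithinAt.fun_sum fun k hk ↦ hdiff _ (hz k hk) u hu)
    hu hw ?_
  calc ∑ k ∈ s, F (z k) u + (∑ k ∈ s, D2F (z k) u) (w - u) + #s * α / 2 * ‖w - u‖ ^ 2
      = ∑ k ∈ s, (F (z k) u + D2F (z k) u (w - u) + α / 2 * ‖w - u‖ ^ 2) := by
        rw [_root_.sum_apply, sum_add_distrib, sum_add_distrib, sum_const, nsmul_eq_mul]
        ring
    _ ≤ ∑ k ∈ s, F (z k) w := sum_le_sum fun k hk ↦ hA1 _ (hz k hk) u hu w hw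

lemma sub_le_sub_add_of_lipschitz_fderiv (hX : Convex ℝ X)
    (hdiff : ∀ z ∈ X, ∀ y ∈ X, HasFDerivWithinAt (F z) (D2F z y) X y)
    (hA3 : ∀ w ∈ X, ∀ y ∈ X, ∀ z ∈ X, ‖D2F w z - D2F y z‖ ≤ β * ‖w - y‖)
    {z₁ z₂ y w : E} (hz₁ : z₁ ∈ X) (hz₂ : z₂ ∈ X) (hy : y ∈ X) (hw : w ∈ X) :
    F z₁ y - F z₁ w ≤ F z₂ y - F z₂ w + β * ‖z₁ - z₂‖ * ‖w - y‖ := by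
  have hmvt := hX.norm_image_sub_le_of_norm_hasFDerivWithin_le
    (f := fun v ↦ F z₁ v - F z₂ v) (fun v hv ↦ (hdiff z₁ hz₁ v hv).sub (hdiff z₂ hz₂ v hv))
    (fun v hv ↦ hA3 z₁ hz₁ z₂ hz₂ v hv) hy hw
  rw [Real.norm_eq_abs] at hmvt
  linarith [neg_abs_le (F z₁ w - F z₂ w - (F z₁ y - F z₂ y))]

lemma mul_norm_succ_sub_le_of_isMinOn (hα : 0 < α) (hβ : 0 ≤ β) (hX : Convex ℝ X)
    (hdiff : ∀ z ∈ X, ∀ y ∈ X, HasFDerivWithinAt (F z) (D2F z y) X y)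
    (hA1 : ∀ z ∈ X, ∀ y ∈ X, ∀ w ∈ X,
      F z w ≥ F z y + D2F z y (w - y) + α / 2 * ‖w - y‖ ^ 2)
    (hA3 : ∀ w ∈ X, ∀ y ∈ X, ∀ z ∈ X, ‖D2F w z - D2F y z‖ ≤ β * ‖w - y‖)
    {x : ℕ → E} (hx : ∀ n, 1 ≤ n → x n ∈ X)
    (hmin : ∀ n, 1 ≤ n → IsMinOn (fun y ↦ ∑ k ∈ Icc 1 n, F (x k) y) X (x (n + 1)))
    {p : ℕ} (hp : 1 ≤ p) :
    ((p : ℝ) + 1) * p * ‖x (p + 2) - x (p + 1)‖ ≤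
      β / α * ∑ k ∈ Icc 1 p, ‖x (p + 1) - x k‖ := by
  set Φ : E → ℝ := fun y ↦ ∑ k ∈ Icc 1 p, F (x k) y
  set d := ‖x (p + 2) - x (p + 1)‖
  set S := ∑ k ∈ Icc 1 p, ‖x (p + 1) - x k‖
  have hxk : ∀ n ∈ Icc 1 (p + 1), x n ∈ X := fun n hn ↦ hx n (mem_Icc.1 hn).1
  have hx1 := hx (p + 1) (by omega)
  have hx2 := hx (p + 2) (by omega)
  have hmin₁ : Φ (x (p + 1)) + p * α / 2 * d ^ 2 ≤ Φ (x (p + 2)) := by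
    simpa using IsMinOn.sum_add_card_mul_sq_le hX hdiff hA1
      (fun k hk ↦ hxk k (Icc_subset_Icc_right (by omega) hk)) (hmin p hp) hx1 hx2
  have hmin₂ : Φ (x (p + 2)) + F (x (p + 1)) (x (p + 2)) + (p + 1) * α / 2 * d ^ 2 ≤
      Φ (x (p + 1)) + F (x (p + 1)) (x (p + 1)) := by
    have h := IsMinOn.sum_add_card_mul_sq_le hX hdiff hA1 hxk (hmin (p + 1) (by omega)) hx2 hx1
    rw [sum_Icc_succ_top (by omega), sum_Icc_succ_top (by omega), Nat.card_Icc,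
      norm_sub_rev] at h
    push_cast at h
    exact h
  have hlip : p * (F (x (p + 1)) (x (p + 1)) - F (x (p + 1)) (x (p + 2))) ≤
      Φ (x (p + 1)) - Φ (x (p + 2)) + β * d * S := by
    have h := sum_le_sum fun k (hk : k ∈ Icc 1 p) ↦ sub_le_sub_add_of_lipschitz_fderiv hX hdiff hA3
      hx1 (hxk k (Icc_subset_Icc_right (by omega) hk)) hx1 hx2
    rw [sum_const, Nat.card_Icc, nsmul_eq_mul, sum_add_distrib, sum_sub_distrib,
      ← sum_mul, ← mul_sum] at h
    simp only [Nat.add_sub_cancel] at h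
    linarith
  have hp0 : (1 : ℝ) ≤ p := by exact_mod_cast hp
  have key : α * (((p : ℝ) + 1) * p * d) * d ≤ β * S * d := by nlinarith
  rw [div_mul_eq_mul_div, le_div_iff₀ hα]
  rcases (norm_nonneg _ : 0 ≤ d).eq_or_lt with hd | hd
  · rw [show d = 0 from hd.symm, mul_zero, zero_mul]; positivity
  · nlinarith

end StronglyConvex

/-- Corollary: bound on `S_{m:n}`.
Under (A1), (A2), (A3) with `θ = β/α < 1`, there is a constant `C > 0` depending only
on `θ`, `α`, `G₂` (hence quantified before the problem data) such that for all
`n > m ≥ 2`, `S_{m:n} ≤ C (θ/((n−m) m^{2−θ}) + 1/n^{1−θ})`, where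
`S_{m:n} = (Σ_{k=m}^{n−1} ‖x_n − x_k‖)/(n−m)`. -/
theorem stmt_7 (α G₂ β θ : ℝ) (hα : 0 < α) (hG₂ : 0 < G₂) (hβ : 0 ≤ β)
    (hθ : θ = β / α) (hθ1 : θ < 1) :
    ∃ C > (0 : ℝ), ∀ (E : Type u) [NormedAddCommGroup E] [NormedSpace ℝ E]
      (X : Set E), Convex ℝ X →
      ∀ (F : E → E → ℝ) (D2F : E → E → (E →L[ℝ] ℝ)),
      (∀ z ∈ X, ∀ y ∈ X, HasFDerivWithinAt (F z) (D2F z y) X y) →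
      (∀ z ∈ X, ∀ y ∈ X, ∀ w ∈ X,
        F z w ≥ F z y + D2F z y (w - y) + α / 2 * ‖w - y‖ ^ 2) →
      (∀ z ∈ X, ∀ w ∈ X, ∀ y ∈ X, |F z w - F z y| ≤ G₂ * ‖w - y‖) →
      (∀ w ∈ X, ∀ y ∈ X, ∀ z ∈ X, ‖D2F w z - D2F y z‖ ≤ β * ‖w - y‖) →
      ∀ x : ℕ → E, (∀ n, 1 ≤ n → x n ∈ X) →
      (∀ n, 1 ≤ n → ∀ y ∈ X,
        ∑ k ∈ Finset.Icc 1 n, F (x k) (x (n + 1)) ≤ ∑ k ∈ Finset.Icc 1 n, F (x k) y) →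
      ∀ m n : ℕ, 2 ≤ m → m < n →
        (∑ k ∈ Finset.Icc m (n - 1), ‖x n - x k‖) / ((n : ℝ) - (m : ℝ)) ≤
          C * (θ / (((n : ℝ) - (m : ℝ)) * (m : ℝ) ^ (2 - θ)) +
            1 / (n : ℝ) ^ (1 - θ)) := by
  have hθ0 : 0 ≤ θ := hθ ▸ div_nonneg hβ hα.le
  obtain ⟨C, hC, hθC⟩ : ∃ C > (0 : ℝ), θ = 0 ∨ 0 < θ ∧ C = 4 * G₂ / α * (2 / θ) := by
    rcases hθ0.eq_or_lt with h | h
    exacts [⟨1, one_pos, .inl h.symm⟩, ⟨_, by positivity, .inr ⟨h, rfl⟩⟩]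
  refine ⟨C, hC, fun E _ _ X hX F D2F hdiff hA1 hA2 hA3 x hx hmin m n hm hmn ↦ ?_⟩
  have hrec (p : ℕ) (hp : 1 ≤ p) : ((p : ℝ) + 1) * p * ‖x (p + 2) - x (p + 1)‖ ≤
      θ * ∑ k ∈ Icc 1 p, ‖x (p + 1) - x k‖ :=
    hθ ▸ mul_norm_succ_sub_le_of_isMinOn hα hβ hX hdiff hA1 hA3 hx
      (fun n hn ↦ isMinOn_iff.2 (hmin n hn)) hp
  rw [show Icc m (n - 1) = Ico m n by ext; simp only [mem_Icc, mem_Ico]; omega]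
  refine div_sub_le_of_le_mul_rpow hθ0 hC.le hmn ?_
  rcases hθC with rfl | ⟨hθpos, rfl⟩
  · have hmn' : (m : ℝ) ≤ n := by exact_mod_cast hmn.le
    rw [sum_Ico_norm_sub_eq_zero x (fun p hp ↦ (hrec p hp).trans_eq (zero_mul _)) hm hmn.le]
    exact mul_nonneg (mul_nonneg hC.le (by linarith)) (by positivity)
  · have hdiam : ‖x 2 - x 1‖ ≤ 4 * G₂ / α :=
      norm_sub_le_of_strongConvex_of_lipschitz hX hα hG₂.le (hA1 _ (hx 1 le_rfl))
        (hA2 _ (hx 1 le_rfl)) (hx 2 (by norm_num)) (hx 1 le_rfl)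
    exact sum_Ico_norm_sub_le_mul_rpow hθpos hθ1.le x hdiam hrec (by omega) hmn
end

section
/- Let X be a convex subset of a real normed vector space and let F : X × X → ℝ satisfy (A1) uniform α-strong convexity in the second argument and (A3) uniform β-Lipschitz continuity of ∇₂F in the first argument. Let (x_n) be the value-aggregation sequence: x₁ ∈ X and x_{n+1} ∈ argmin_{x∈X} Σ_{k=1}^n F(x_k, x), write f_n(x) = F(x_n, x), and define S_n = (Σ_{k=1}^{n−1} ‖x_n − x_k‖)/(n−1) for n ≥ 2. Then for all n ≥ 2, f_n(x_n) − inf_{x∈X} f_n(x) ≤ β² S_n² / (2α). -/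
/-!
Write `a = x_n` and `g_k = ∇₂F(x_k, a)`. Since `a` minimises `Σ_{k<n} F(x_k, ·)` over the convex
set `X`, first-order optimality gives `Σ_{k<n} g_k(y - a) ≥ 0` for every `y ∈ X`. By (A3) each
`g_k` is within `β‖a - x_k‖` of `∇₂F(a, a)`, so averaging yields `∇₂F(a, a)(y - a) ≥ -β S_n ‖y - a‖`.
Strong convexity (A1) of `f_n` then gives `f_n(a) - f_n(y) ≤ β S_n d - (α/2) d²` with
`d = ‖y - a‖`, and maximising over `d` bounds this by `β² S_n² / (2α)`.
-/

open Finset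

section

variable {E : Type*} [NormedAddCommGroup E] [NormedSpace ℝ E]

theorem IsMinOn.hasFDerivWithinAt_sub_nonneg {X : Set E} (hX : Convex ℝ X) {f : E → ℝ}
    {f' : E →L[ℝ] ℝ} {a y : E} (hmin : IsMinOn f X a) (hf : HasFDerivWithinAt f f' X a)
    (ha : a ∈ X) (hy : y ∈ X) : 0 ≤ f' (y - a) :=
  hmin.localize.hasFDerivWithinAt_nonneg hf
    (sub_mem_posTangentConeAt_of_segment_subset (hX.segment_subset ha hy))

theorem neg_avg_norm_sub_mul_le_apply {ι : Type*} {s : Finset ι} (hs : s.Nonempty)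
    (g : E →L[ℝ] ℝ) (g' : ι → E →L[ℝ] ℝ) {v : E} (h : 0 ≤ ∑ i ∈ s, g' i v) :
    -((∑ i ∈ s, ‖g - g' i‖) / #s * ‖v‖) ≤ g v := by
  have hcard : (0 : ℝ) < #s := by exact_mod_cast hs.card_pos
  have hterm : ∀ i ∈ s, -(‖g - g' i‖ * ‖v‖) ≤ g v - g' i v := fun i _ =>
    neg_le_of_abs_le ((g - g' i).le_opNorm v)
  have hsum : -((∑ i ∈ s, ‖g - g' i‖) * ‖v‖) ≤ #s * g v := by
    calc -((∑ i ∈ s, ‖g - g' i‖) * ‖v‖) = ∑ i ∈ s, -(‖g - g' i‖ * ‖v‖) := by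
          rw [sum_mul, sum_neg_distrib]
      _ ≤ ∑ i ∈ s, (g v - g' i v) := sum_le_sum hterm
      _ = #s * g v - ∑ i ∈ s, g' i v := by rw [sum_sub_distrib, sum_const, nsmul_eq_mul]
      _ ≤ #s * g v := by linarith
  rw [div_mul_eq_mul_div, ← neg_div, div_le_iff₀' hcard]
  exact hsum

theorem sub_le_sq_div_of_strongConvex {f : E → ℝ} {g : E →L[ℝ] ℝ} {a y : E} {α c : ℝ}
    (hα : 0 < α) (hsc : f y ≥ f a + g (y - a) + α / 2 * ‖y - a‖ ^ 2)
    (hg : -(c * ‖y - a‖) ≤ g (y - a)) : f a - f y ≤ c ^ 2 / (2 * α) := by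
  rw [le_div_iff₀ (by positivity)]
  nlinarith [sq_nonneg (c - α * ‖y - a‖)]

end

theorem sub_csInf_image_le {α : Type*} {f : α → ℝ} {X : Set α} {a : α} (ha : a ∈ X) {C : ℝ}
    (h : ∀ y ∈ X, f a - f y ≤ C) : f a - sInf (f '' X) ≤ C := by
  have : f a - C ≤ sInf (f '' X) :=
    le_csInf ⟨f a, a, ha, rfl⟩ fun _ ⟨y, hy, hfy⟩ => hfy ▸ by linarith [h y hy]
  linarith

theorem stmt_8_general
    {E : Type*} [NormedAddCommGroup E] [NormedSpace ℝ E]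
    (X : Set E) (hX : Convex ℝ X)
    (F : E → E → ℝ) (D2F : E → E → (E →L[ℝ] ℝ))
    (α β : ℝ) (hα : 0 < α)
    (hgrad : ∀ z ∈ X, ∀ y ∈ X, HasFDerivWithinAt (F z) (D2F z y) X y)
    (hA1 : ∀ z ∈ X, ∀ y ∈ X, ∀ x ∈ X,
      F z x ≥ F z y + D2F z y (x - y) + α / 2 * ‖x - y‖ ^ 2)
    (hA3 : ∀ x ∈ X, ∀ y ∈ X, ∀ z ∈ X, ‖D2F x z - D2F y z‖ ≤ β * ‖x - y‖)
    (x : ℕ → E) (hmem : ∀ n, 1 ≤ n → x n ∈ X)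
    (hftl : ∀ n, 1 ≤ n → ∀ y ∈ X,
      ∑ k ∈ Finset.Icc 1 n, F (x k) (x (n + 1)) ≤ ∑ k ∈ Finset.Icc 1 n, F (x k) y)
    (S : ℕ → ℝ)
    (hS : ∀ n, 2 ≤ n →
      S n = (∑ k ∈ Finset.Icc 1 (n - 1), ‖x n - x k‖) / ((n : ℝ) - 1)) :
    ∀ n, 2 ≤ n →
      F (x n) (x n) - sInf (F (x n) '' X) ≤ β ^ 2 * (S n) ^ 2 / (2 * α) := by
  intro n hn
  obtain ⟨M, rfl⟩ : ∃ M, n = M + 1 := ⟨n - 1, by omega⟩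
  set a := x (M + 1)
  have ha : a ∈ X := hmem _ (by omega)
  have hxk : ∀ k ∈ Icc 1 M, x k ∈ X := fun k hk => hmem k (mem_Icc.mp hk).1
  have hcard : (#(Icc 1 M) : ℝ) = M := by simp
  have hSM : S (M + 1) = (∑ k ∈ Icc 1 M, ‖a - x k‖) / #(Icc 1 M) := by
    rw [hS _ hn, hcard]; push_cast; simp [a]
  have hgap : (∑ k ∈ Icc 1 M, ‖D2F a a - D2F (x k) a‖) / #(Icc 1 M) ≤ β * S (M + 1) := by
    rw [hSM, mul_div_assoc', mul_sum]
    gcongr with k hk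
    exact hA3 a ha (x k) (hxk k hk) a ha
  rw [← mul_pow]
  refine sub_csInf_image_le ha fun y hy => sub_le_sq_div_of_strongConvex hα (hA1 a ha a ha y hy) ?_
  have hopt : 0 ≤ ∑ k ∈ Icc 1 M, D2F (x k) a (y - a) := by
    simpa only [_root_.sum_apply] using
      IsMinOn.hasFDerivWithinAt_sub_nonneg (f := fun v => ∑ k ∈ Icc 1 M, F (x k) v) hX
        (fun z hz => hftl M (by omega) z hz)
        (HasFDerivWithinAt.fun_sum fun k hk => hgrad _ (hxk k hk) a ha) ha hy
  exact (neg_le_neg (mul_le_mul_of_nonneg_right hgap (norm_nonneg _))).trans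
    (neg_avg_norm_sub_mul_le_apply (nonempty_Icc.mpr (by omega)) _ _ hopt)

/-- Per-round optimality gap of the Follow-the-Leader iterate.
Under (A1) uniform `α`-strong convexity in the second argument and (A3) uniform
`β`-Lipschitzness of `∇₂F` in the first argument, the Follow-the-Leader iterates
satisfy `f_n(x_n) − inf_{x ∈ X} f_n(x) ≤ β² S_n² / (2α)` for `n ≥ 2`, where
`f_n = F(x_n, ·)` and `S_n = (Σ_{k=1}^{n−1} ‖x_n − x_k‖)/(n−1)`. -/
theorem stmt_8
    {E : Type*} [NormedAddCommGroup E] [NormedSpace ℝ E]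
    (X : Set E) (hX : Convex ℝ X)
    (F : E → E → ℝ) (D2F : E → E → (E →L[ℝ] ℝ))
    (α β : ℝ) (hα : 0 < α) (hβ : 0 ≤ β)
    (hgrad : ∀ z ∈ X, ∀ y ∈ X, HasFDerivWithinAt (F z) (D2F z y) X y)
    (hA1 : ∀ z ∈ X, ∀ y ∈ X, ∀ x ∈ X,
      F z x ≥ F z y + D2F z y (x - y) + α / 2 * ‖x - y‖ ^ 2)
    (hA3 : ∀ x ∈ X, ∀ y ∈ X, ∀ z ∈ X, ‖D2F x z - D2F y z‖ ≤ β * ‖x - y‖)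
    (x : ℕ → E) (hmem : ∀ n, 1 ≤ n → x n ∈ X)
    (hftl : ∀ n, 1 ≤ n → ∀ y ∈ X,
      ∑ k ∈ Finset.Icc 1 n, F (x k) (x (n + 1)) ≤ ∑ k ∈ Finset.Icc 1 n, F (x k) y)
    (S : ℕ → ℝ)
    (hS : ∀ n, 2 ≤ n →
      S n = (∑ k ∈ Finset.Icc 1 (n - 1), ‖x n - x k‖) / ((n : ℝ) - 1)) :
    ∀ n, 2 ≤ n →
      F (x n) (x n) - sInf (F (x n) '' X) ≤ β ^ 2 * (S n) ^ 2 / (2 * α) :=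
  stmt_8_general X hX F D2F α β hα hgrad hA1 hA3 x hmem hftl S hS
end

section
/- Let θ > 0 and let (x_n)_{n≥1} be a real sequence satisfying x_{n+1} = (1 − (1−θ)/n) x_n for all n ≥ 1, with x₁ ≠ 0. Then: (i) if θ < 1, the sequence converges to 0 (so the cost F(x_n, x_n) = (1/2)(θ−1)² x_n² converges to 0); (ii) if θ > 1, then |x_n| is nondecreasing and |x_n| → ∞, so the cost F(x_n, x_n) = (1/2)(θ−1)² x_n² diverges to infinity. -/
open Filter Finset

/-- Behavior of the two-stage example.
For the recursion `x_{n+1} = (1 − (1−θ)/n) x_n` (`n ≥ 1`) with `θ > 0` and `x₁ ≠ 0`: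
if `θ < 1` the sequence converges to `0` and the cost `(1/2)(θ−1)² x_n²` tends to `0`;
if `θ > 1` then `|x_n|` is nondecreasing and tends to infinity, and the cost
`(1/2)(θ−1)² x_n²` diverges to infinity. -/
theorem stmt_10 (θ : ℝ) (hθpos : 0 < θ)
    (x : ℕ → ℝ) (hx1 : x 1 ≠ 0)
    (hrec : ∀ n : ℕ, 1 ≤ n → x (n + 1) = (1 - (1 - θ) / (n : ℝ)) * x n) :
    (θ < 1 →
      Filter.Tendsto x Filter.atTop (nhds 0) ∧
      Filter.Tendsto (fun n => 1 / 2 * (θ - 1) ^ 2 * (x n) ^ 2)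
        Filter.atTop (nhds 0)) ∧
    (1 < θ →
      (∀ n : ℕ, 1 ≤ n → |x n| ≤ |x (n + 1)|) ∧
      Filter.Tendsto (fun n => |x n|) Filter.atTop Filter.atTop ∧
      Filter.Tendsto (fun n => 1 / 2 * (θ - 1) ^ 2 * (x n) ^ 2)
        Filter.atTop Filter.atTop) := by
  set H : ℕ → ℝ := fun n => ∑ i ∈ Finset.range n, (1 : ℝ) / (i + 1) with hH
  have hHnonneg : ∀ n, 0 ≤ H n := fun n =>
    Finset.sum_nonneg fun i _ => by positivity
  have hHtop : Tendsto H atTop atTop := Real.tendsto_sum_range_one_div_nat_succ_atTop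
  have hHsucc : ∀ n : ℕ, H (n + 1) = H n + 1 / (n + 1) := fun n => by
    simp [hH, Finset.sum_range_succ]
  -- positivity of the factor
  have hfac : ∀ n : ℕ, 1 ≤ n → 0 < 1 - (1 - θ) / (n : ℝ) := by
    intro n hn
    have hn1 : (1 : ℝ) ≤ (n : ℝ) := by exact_mod_cast hn
    have hn0 : (0 : ℝ) < (n : ℝ) := by linarith
    have : (1 - θ) / (n : ℝ) < 1 := (div_lt_one hn0).mpr (by linarith)
    linarith
  have habs : ∀ n : ℕ, 1 ≤ n →
      |x (n + 1)| = (1 - (1 - θ) / (n : ℝ)) * |x n| := by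
    intro n hn
    rw [hrec n hn, abs_mul, abs_of_pos (hfac n hn)]
  constructor
  · intro hθ1
    set c : ℝ := 1 - θ with hc
    have hc0 : 0 < c := by linarith
    have hc1 : c < 1 := by linarith
    -- key bound
    have key : ∀ n : ℕ, |x (n + 1)| * (1 + c * H n) ≤ |x 1| := by
      intro n
      induction n with
      | zero => simp [hH]
      | succ n ih =>
        have hn1 : (1 : ℕ) ≤ n + 1 := Nat.le_add_left 1 n
        have h1 := habs (n + 1) hn1
        have hfac' := hfac (n + 1) hn1
        push_cast at h1 hfac'
        rw [h1, hHsucc]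
        have hx0 : 0 ≤ |x (n + 1)| := abs_nonneg _
        have hHn := hHnonneg n
        have hnpos : (0 : ℝ) < (n : ℝ) + 1 := by positivity
        have hkey : (1 - c / ((n : ℝ) + 1)) * (1 + c * (H n + 1 / ((n : ℝ) + 1)))
            ≤ 1 + c * H n := by
          have hcd : 0 ≤ c / ((n:ℝ)+1) := by positivity
          have hid : c * (1 / ((n:ℝ)+1)) = c / ((n:ℝ)+1) := by ring
          nlinarith [mul_nonneg hcd (mul_nonneg hc0.le hHn), mul_nonneg hcd hcd]
        calc (1 - c / ((n:ℝ) + 1)) * |x (n + 1)| * (1 + c * (H n + 1 / ((n:ℝ) + 1)))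
            = |x (n + 1)| * ((1 - c / ((n:ℝ) + 1)) * (1 + c * (H n + 1 / ((n:ℝ) + 1)))) := by ring
          _ ≤ |x (n + 1)| * (1 + c * H n) := by
              apply mul_le_mul_of_nonneg_left hkey hx0
          _ = |x (n + 1)| * (1 + c * H n) := rfl
          _ ≤ |x 1| := ih
    have hbound : ∀ n : ℕ, |x (n + 1)| ≤ |x 1| / (1 + c * H n) := by
      intro n
      have hpos : 0 < 1 + c * H n := by nlinarith [hHnonneg n]
      rw [le_div_iff₀ hpos]
      exact key n
    have hden : Tendsto (fun n => 1 + c * H n) atTop atTop :=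
      tendsto_atTop_add_const_left _ 1 (hHtop.const_mul_atTop hc0)
    have hzero : Tendsto (fun n => |x (n + 1)|) atTop (nhds 0) := by
      apply squeeze_zero (fun n => abs_nonneg _) hbound
      exact Tendsto.div_atTop tendsto_const_nhds hden
    have hx0 : Tendsto x atTop (nhds 0) := by
      rw [tendsto_zero_iff_abs_tendsto_zero]
      exact (tendsto_add_atTop_iff_nat 1).mp hzero
    refine ⟨hx0, ?_⟩
    have := ((hx0.pow 2).const_mul (1 / 2 * (θ - 1) ^ 2))
    simpa using this
  · intro hθ1
    set d : ℝ := θ - 1 with hd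
    have hd0 : 0 < d := by linarith
    have hmono : ∀ n : ℕ, 1 ≤ n → |x n| ≤ |x (n + 1)| := by
      intro n hn
      rw [habs n hn]
      have hn1 : (1 : ℝ) ≤ (n : ℝ) := by exact_mod_cast hn
      have : (1 : ℝ) ≤ 1 - (1 - θ) / (n : ℝ) := by
        have h1 : 0 ≤ (θ - 1) / (n : ℝ) := by positivity
        have h2 : (1 - θ) / (n : ℝ) = -((θ - 1) / (n : ℝ)) := by ring
        linarith
      nlinarith [abs_nonneg (x n)]
    have key : ∀ n : ℕ, |x 1| * (1 + d * H n) ≤ |x (n + 1)| := by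
      intro n
      induction n with
      | zero => simp [hH]
      | succ n ih =>
        have hn1 : (1 : ℕ) ≤ n + 1 := Nat.le_add_left 1 n
        have h1 := habs (n + 1) hn1
        push_cast at h1
        rw [h1, hHsucc]
        have hx0 : 0 ≤ |x 1| := abs_nonneg _
        have hHn := hHnonneg n
        have hnpos : (0 : ℝ) < (n : ℝ) + 1 := by positivity
        have hfac2 : (1 : ℝ) ≤ 1 - (1 - θ) / ((n : ℝ) + 1) := by
          have h1 : 0 ≤ (θ - 1) / ((n : ℝ) + 1) := by positivity
          have h2 : (1 - θ) / ((n:ℝ) + 1) = -((θ - 1) / ((n:ℝ) + 1)) := by ring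
          linarith
        have hkey : 1 + d * (H n + 1 / ((n:ℝ) + 1))
            ≤ (1 - (1 - θ) / ((n:ℝ) + 1)) * (1 + d * H n) := by
          have heq : (1 - (1 - θ) / ((n:ℝ) + 1)) = 1 + d / ((n:ℝ)+1) := by
            field_simp [hd]; ring
          rw [heq]
          have hdn : 0 ≤ d / ((n:ℝ)+1) := by positivity
          have hid : d * (1 / ((n:ℝ)+1)) = d / ((n:ℝ)+1) := by ring
          nlinarith [mul_nonneg hdn (mul_nonneg hd0.le hHn)]
        calc |x 1| * (1 + d * (H n + 1 / ((n:ℝ)+1)))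
            ≤ |x 1| * ((1 - (1 - θ) / ((n:ℝ)+1)) * (1 + d * H n)) :=
              mul_le_mul_of_nonneg_left hkey hx0
          _ = (1 - (1 - θ) / ((n:ℝ)+1)) * (|x 1| * (1 + d * H n)) := by ring
          _ ≤ (1 - (1 - θ) / ((n:ℝ)+1)) * |x (n + 1)| := by
              apply mul_le_mul_of_nonneg_left ih
              linarith [hfac2]
    have hx1pos : 0 < |x 1| := abs_pos.mpr hx1
    have hlow : Tendsto (fun n => |x 1| * (1 + d * H n)) atTop atTop := by
      apply Tendsto.const_mul_atTop hx1pos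
      exact tendsto_atTop_add_const_left _ 1 (hHtop.const_mul_atTop hd0)
    have htop1 : Tendsto (fun n => |x (n + 1)|) atTop atTop :=
      tendsto_atTop_mono key hlow
    have htop : Tendsto (fun n => |x n|) atTop atTop :=
      (tendsto_add_atTop_iff_nat 1).mp htop1
    refine ⟨hmono, htop, ?_⟩
    have hsq : Tendsto (fun n => |x n| ^ 2) atTop atTop :=
      (tendsto_pow_atTop (by norm_num)).comp htop
    have hconst : (0 : ℝ) < 1 / 2 * (θ - 1) ^ 2 := by positivity
    have := hsq.const_mul_atTop hconst
    simpa [sq_abs] using this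
end

section
/- Let X be a convex subset of a real normed vector space and let F : X × X → ℝ satisfy (A1) uniform α-strong convexity in the second argument and (A3) uniform β-Lipschitz continuity of ∇₂F in the first argument; set θ = β/α. Let g_n : X → ℝ (n ≥ 1) be differentiable functions such that each g_n is α-strongly convex on X, and define the sequence x₁ ∈ X, x_{n+1} ∈ argmin_{x∈X} Σ_{k=1}^n g_k(x). Write f_n(x) = F(x_n, x), ξ_n = ∇f_n − ∇g_n, ξ̄_{n−1} = (1/(n−1)) Σ_{k=1}^{n−1} ξ_k, and S_n = (Σ_{k=1}^{n−1} ‖x_n − x_k‖)/(n−1). Then for all n ≥ 2, ‖x_{n+1} − x_n‖ ≤ θ S_n / n + (1/(nα)) ( ‖ξ_n(x_n)‖_* + ‖ξ̄_{n−1}(x_n)‖_* ). -/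
/-!
With `G_m = ∑_{k ≤ m} g_k`, which is `mα`-strongly convex, the first-order optimality of
`x_{n+1}` for `G_n` and of `x_n` for `G_{n-1}` give `nα ‖x_n - x_{n+1}‖² ≤ ∇g_n(x_n)(x_n - x_{n+1})`.
Write `∇g_n(x_n) = ∇₂F(x_n, x_n) - ξ_n(x_n)` and `∇₂F(x_n, x_n)` as the average over `k < n` of
`(∇₂F(x_n, x_n) - ∇₂F(x_k, x_n)) + ξ_k(x_n) + ∇g_k(x_n)`: the first terms are bounded through (A3),
the `ξ_k(x_n)` average to `ξ̄_{n-1}(x_n)`, and the `∇g_k(x_n)` sum to `∇G_{n-1}(x_n)`, which is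
nonpositive on `x_n - x_{n+1}` by the optimality of `x_n` once more.
-/

open scoped Finset

section

variable {E : Type*} [NormedAddCommGroup E] [NormedSpace ℝ E]

def StrongConvexWithGradOn (X : Set E) (c : ℝ) (h : E → ℝ) (Dh : E → E →L[ℝ] ℝ) : Prop :=
  ∀ y ∈ X, ∀ w ∈ X, h y + Dh y (w - y) + c / 2 * ‖w - y‖ ^ 2 ≤ h w

theorem StrongConvexWithGradOn.sum {ι : Type*} {X : Set E} {c : ℝ} {s : Finset ι}
    {g : ι → E → ℝ} {Dg : ι → E → E →L[ℝ] ℝ}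
    (hg : ∀ k ∈ s, StrongConvexWithGradOn X c (g k) (Dg k)) :
    StrongConvexWithGradOn X (#s * c) (fun y ↦ ∑ k ∈ s, g k y) (fun y ↦ ∑ k ∈ s, Dg k y) := by
  intro y hy w hw
  calc _ = ∑ k ∈ s, (g k y + Dg k y (w - y) + c / 2 * ‖w - y‖ ^ 2) := by
        simp only [Finset.sum_add_distrib, Finset.sum_const, nsmul_eq_mul, sum_apply]
        ring
    _ ≤ _ := Finset.sum_le_sum fun k hk ↦ hg k hk y hy w hw

theorem IsMinOn.apply_sub_nonneg_of_hasFDerivWithinAt {X : Set E} (hX : Convex ℝ X)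
    {h : E → ℝ} {D : E →L[ℝ] ℝ} {a b : E} (hmin : IsMinOn h X a)
    (hd : HasFDerivWithinAt h D X a) (ha : a ∈ X) (hb : b ∈ X) : 0 ≤ D (b - a) :=
  hmin.localize.hasFDerivWithinAt_nonneg hd
    (sub_mem_posTangentConeAt_of_segment_subset (hX.segment_subset ha hb))

theorem StrongConvexWithGradOn.mul_norm_sub_sq_le_of_isMinOn {X : Set E} (hX : Convex ℝ X)
    {c : ℝ} {h : E → ℝ} {Dh : E → E →L[ℝ] ℝ} (hh : StrongConvexWithGradOn X c h Dh)
    {a b : E} (hmin : IsMinOn h X a) (hd : HasFDerivWithinAt h (Dh a) X a)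
    (ha : a ∈ X) (hb : b ∈ X) : c * ‖b - a‖ ^ 2 ≤ Dh b (b - a) := by
  have hfirst := hmin.apply_sub_nonneg_of_hasFDerivWithinAt hX hd ha hb
  have hab := hh a ha b hb
  have hba := hh b hb a ha
  rw [norm_sub_rev, ← neg_sub, map_neg] at hba
  linarith

theorem ContinuousLinearMap.apply_le_of_sum_apply_nonpos {ι : Type*} {s : Finset ι}
    (hs : s.Nonempty) (A : E →L[ℝ] ℝ) (B C : ι → E →L[ℝ] ℝ) {v : E}
    (hC : ∑ k ∈ s, C k v ≤ 0) :
    A v ≤ ((#s : ℝ)⁻¹ * ∑ k ∈ s, ‖A - B k‖ + ‖(#s : ℝ)⁻¹ • ∑ k ∈ s, (B k - C k)‖) * ‖v‖ := by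
  have hm : (0 : ℝ) < #s := by exact_mod_cast hs.card_pos
  have hA : A = (#s : ℝ)⁻¹ • ∑ k ∈ s, (A - B k) + (#s : ℝ)⁻¹ • ∑ k ∈ s, (B k - C k)
      + (#s : ℝ)⁻¹ • ∑ k ∈ s, C k := by
    rw [← smul_add, ← smul_add, ← Finset.sum_add_distrib, ← Finset.sum_add_distrib]
    simp only [sub_add_sub_cancel, sub_add_cancel, Finset.sum_const, ← Nat.cast_smul_eq_nsmul ℝ,
      smul_smul, inv_mul_cancel₀ hm.ne', one_smul]
  have hAB : ∑ k ∈ s, (A - B k) v ≤ ∑ k ∈ s, ‖A - B k‖ * ‖v‖ :=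
    Finset.sum_le_sum fun k _ ↦ (Real.le_norm_self _).trans (le_opNorm _ _)
  have hBC := (Real.le_norm_self _).trans (le_opNorm ((#s : ℝ)⁻¹ • ∑ k ∈ s, (B k - C k)) v)
  have hAv := DFunLike.congr_fun hA v
  simp only [add_apply, smul_apply, sum_apply, smul_eq_mul] at hAv hBC
  rw [← Finset.sum_mul] at hAB
  have := mul_le_mul_of_nonneg_left hAB (inv_nonneg.2 hm.le)
  have := mul_nonpos_of_nonneg_of_nonpos (inv_nonneg.2 hm.le) hC
  linarith

theorem le_div_of_mul_sq_le_mul_s11 {c K d : ℝ} (hc : 0 < c) (hK : 0 ≤ K)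
    (h : c * d ^ 2 ≤ K * d) : d ≤ K / c := by
  rw [le_div_iff₀ hc]
  nlinarith

section FollowTheLeader

variable {X : Set E} {α : ℝ} {g : ℕ → E → ℝ} {Dg : ℕ → E → E →L[ℝ] ℝ} {x : ℕ → E}

theorem hasFDerivWithinAt_sum_Icc
    (hgrad : ∀ n, 1 ≤ n → ∀ y ∈ X, HasFDerivWithinAt (g n) (Dg n y) X y) (m : ℕ) {y : E}
    (hy : y ∈ X) :
    HasFDerivWithinAt (fun y ↦ ∑ k ∈ Finset.Icc 1 m, g k y) (∑ k ∈ Finset.Icc 1 m, Dg k y) X y :=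
  HasFDerivWithinAt.fun_sum fun k hk ↦ hgrad k (Finset.mem_Icc.1 hk).1 y hy

theorem ftl_sum_apply_sub_succ_nonpos (hX : Convex ℝ X)
    (hgrad : ∀ n, 1 ≤ n → ∀ y ∈ X, HasFDerivWithinAt (g n) (Dg n y) X y)
    (hmem : ∀ n, 1 ≤ n → x n ∈ X)
    (hftl : ∀ n, 1 ≤ n → IsMinOn (fun y ↦ ∑ k ∈ Finset.Icc 1 n, g k y) X (x (n + 1)))
    {n : ℕ} (hn : 2 ≤ n) :
    ∑ k ∈ Finset.Icc 1 (n - 1), Dg k (x n) (x n - x (n + 1)) ≤ 0 := by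
  have hxn := hmem n (by omega)
  have hmin := hftl (n - 1) (by omega)
  rw [Nat.sub_add_cancel (by omega)] at hmin
  have hvi := hmin.apply_sub_nonneg_of_hasFDerivWithinAt hX
    (hasFDerivWithinAt_sum_Icc hgrad _ hxn) hxn (hmem (n + 1) (by omega))
  rw [← neg_sub, map_neg, sum_apply] at hvi
  linarith

theorem ftl_mul_norm_sub_sq_le (hX : Convex ℝ X)
    (hgrad : ∀ n, 1 ≤ n → ∀ y ∈ X, HasFDerivWithinAt (g n) (Dg n y) X y)
    (hsc : ∀ n, 1 ≤ n → StrongConvexWithGradOn X α (g n) (Dg n))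
    (hmem : ∀ n, 1 ≤ n → x n ∈ X)
    (hftl : ∀ n, 1 ≤ n → IsMinOn (fun y ↦ ∑ k ∈ Finset.Icc 1 n, g k y) X (x (n + 1)))
    {n : ℕ} (hn : 2 ≤ n) :
    n * α * ‖x n - x (n + 1)‖ ^ 2 ≤ Dg n (x n) (x n - x (n + 1)) := by
  have hxn' := hmem (n + 1) (by omega)
  have hscSum : StrongConvexWithGradOn X (#(Finset.Icc 1 n) * α)
      (fun y ↦ ∑ k ∈ Finset.Icc 1 n, g k y) (fun y ↦ ∑ k ∈ Finset.Icc 1 n, Dg k y) :=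
    StrongConvexWithGradOn.sum fun k hk ↦ hsc k (Finset.mem_Icc.1 hk).1
  have hcurr := hscSum.mul_norm_sub_sq_le_of_isMinOn hX (hftl n (by omega))
    (hasFDerivWithinAt_sum_Icc hgrad n hxn') hxn' (hmem n (by omega))
  have hsplit : ∑ k ∈ Finset.Icc 1 n, Dg k (x n)
      = ∑ k ∈ Finset.Icc 1 (n - 1), Dg k (x n) + Dg n (x n) := by
    have := Finset.sum_Icc_succ_top (show 1 ≤ n - 1 + 1 by omega) fun k ↦ Dg k (x n)
    rwa [Nat.sub_add_cancel (by omega)] at this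
  rw [Nat.card_Icc, add_tsub_cancel_right, hsplit, add_apply, sum_apply] at hcurr
  linarith [ftl_sum_apply_sub_succ_nonpos hX hgrad hmem hftl hn]

end FollowTheLeader

end

theorem stmt_11_general
    {E : Type*} [NormedAddCommGroup E] [NormedSpace ℝ E]
    (X : Set E) (hX : Convex ℝ X)
    (D2F : E → E → (E →L[ℝ] ℝ))
    (α β θ : ℝ) (hα : 0 < α) (hβ : 0 ≤ β) (hθ : θ = β / α)
    (hA3 : ∀ w ∈ X, ∀ y ∈ X, ∀ z ∈ X, ‖D2F w z - D2F y z‖ ≤ β * ‖w - y‖)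
    (g : ℕ → E → ℝ) (Dg : ℕ → E → (E →L[ℝ] ℝ))
    (hgradg : ∀ n, 1 ≤ n → ∀ y ∈ X, HasFDerivWithinAt (g n) (Dg n y) X y)
    (hscg : ∀ n, 1 ≤ n → ∀ y ∈ X, ∀ w ∈ X,
      g n w ≥ g n y + Dg n y (w - y) + α / 2 * ‖w - y‖ ^ 2)
    (x : ℕ → E) (hmem : ∀ n, 1 ≤ n → x n ∈ X)
    (hftl : ∀ n, 1 ≤ n → ∀ y ∈ X,
      ∑ k ∈ Finset.Icc 1 n, g k (x (n + 1)) ≤ ∑ k ∈ Finset.Icc 1 n, g k y)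
    (S : ℕ → ℝ)
    (hS : ∀ n, 2 ≤ n →
      S n = (∑ k ∈ Finset.Icc 1 (n - 1), ‖x n - x k‖) / ((n : ℝ) - 1)) :
    ∀ n, 2 ≤ n →
      ‖x (n + 1) - x n‖ ≤ θ * S n / n +
        1 / ((n : ℝ) * α) * (‖D2F (x n) (x n) - Dg n (x n)‖ +
          ‖((n : ℝ) - 1)⁻¹ •
            ∑ k ∈ Finset.Icc 1 (n - 1), (D2F (x k) (x n) - Dg k (x n))‖) := by
  intro n hn
  set v := x n - x (n + 1)
  set ξ := D2F (x n) (x n) - Dg n (x n)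
  set R := ‖ξ‖ + ‖((n : ℝ) - 1)⁻¹ •
    ∑ k ∈ Finset.Icc 1 (n - 1), (D2F (x k) (x n) - Dg k (x n))‖
  have hxn := hmem n (by omega)
  have hn2 : (2 : ℝ) ≤ n := by exact_mod_cast hn
  have hftl' : ∀ m, 1 ≤ m → IsMinOn (fun y ↦ ∑ k ∈ Finset.Icc 1 m, g k y) X (x (m + 1)) :=
    fun m hm ↦ isMinOn_iff.2 (hftl m hm)
  have hstep := ftl_mul_norm_sub_sq_le hX hgradg hscg hmem hftl' hn
  have hcard : (#(Finset.Icc 1 (n - 1)) : ℝ) = n - 1 := by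
    rw [Nat.card_Icc, add_tsub_cancel_right, Nat.cast_sub (by omega), Nat.cast_one]
  have hA := ContinuousLinearMap.apply_le_of_sum_apply_nonpos
    (Finset.nonempty_Icc.2 (by omega)) (D2F (x n) (x n)) (fun k ↦ D2F (x k) (x n))
    (fun k ↦ Dg k (x n)) (ftl_sum_apply_sub_succ_nonpos hX hgradg hmem hftl' hn)
  rw [hcard] at hA
  have hLip : ((n : ℝ) - 1)⁻¹ * ∑ k ∈ Finset.Icc 1 (n - 1), ‖D2F (x n) (x n) - D2F (x k) (x n)‖
      ≤ β * S n := by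
    rw [hS n hn, mul_div_assoc', inv_mul_eq_div, Finset.mul_sum]
    gcongr with k hk
    · linarith
    · exact hA3 _ hxn _ (hmem k (Finset.mem_Icc.1 hk).1) _ hxn
  have hSnonneg : 0 ≤ S n := by
    rw [hS n hn]
    exact div_nonneg (Finset.sum_nonneg fun k _ ↦ norm_nonneg _) (by linarith)
  have hkey : n * α * ‖v‖ ^ 2 ≤ (β * S n + R) * ‖v‖ := by
    have := mul_le_mul_of_nonneg_right hLip (norm_nonneg v)
    have hξ : -ξ v ≤ ‖ξ‖ * ‖v‖ := (neg_le_abs _).trans (ξ.le_opNorm v)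
    have hDg : Dg n (x n) v = D2F (x n) (x n) v - ξ v := by simp [ξ]
    linarith
  rw [norm_sub_rev]
  calc ‖v‖ ≤ (β * S n + R) / (n * α) :=
        le_div_of_mul_sq_le_mul_s11 (by positivity) (by positivity) (by linarith)
    _ = _ := by rw [hθ]; field_simp

/-- Bound on consecutive iterates with approximated per-round costs.
Under (A1) uniform `α`-strong convexity of `F` in the second argument and (A3) uniform
`β`-Lipschitzness of `∇₂F` in the first argument, if the sequence is generated by
Follow-the-Leader on `α`-strongly convex differentiable approximations `g_n` of
`f_n = F(x_n, ·)`, then for `n ≥ 2`,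
`‖x_{n+1} − x_n‖ ≤ θ S_n/n + (1/(nα))(‖ξ_n(x_n)‖_* + ‖ξ̄_{n−1}(x_n)‖_*)`,
where `ξ_n = ∇f_n − ∇g_n` and `ξ̄_{n−1} = (1/(n−1)) Σ_{k=1}^{n−1} ξ_k`. -/
theorem stmt_11
    {E : Type*} [NormedAddCommGroup E] [NormedSpace ℝ E]
    (X : Set E) (hX : Convex ℝ X)
    (F : E → E → ℝ) (D2F : E → E → (E →L[ℝ] ℝ))
    (α β θ : ℝ) (hα : 0 < α) (hβ : 0 ≤ β) (hθ : θ = β / α)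
    (hgradF : ∀ z ∈ X, ∀ y ∈ X, HasFDerivWithinAt (F z) (D2F z y) X y)
    (hA1 : ∀ z ∈ X, ∀ y ∈ X, ∀ w ∈ X,
      F z w ≥ F z y + D2F z y (w - y) + α / 2 * ‖w - y‖ ^ 2)
    (hA3 : ∀ w ∈ X, ∀ y ∈ X, ∀ z ∈ X, ‖D2F w z - D2F y z‖ ≤ β * ‖w - y‖)
    (g : ℕ → E → ℝ) (Dg : ℕ → E → (E →L[ℝ] ℝ))
    (hgradg : ∀ n, 1 ≤ n → ∀ y ∈ X, HasFDerivWithinAt (g n) (Dg n y) X y)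
    (hscg : ∀ n, 1 ≤ n → ∀ y ∈ X, ∀ w ∈ X,
      g n w ≥ g n y + Dg n y (w - y) + α / 2 * ‖w - y‖ ^ 2)
    (x : ℕ → E) (hmem : ∀ n, 1 ≤ n → x n ∈ X)
    (hftl : ∀ n, 1 ≤ n → ∀ y ∈ X,
      ∑ k ∈ Finset.Icc 1 n, g k (x (n + 1)) ≤ ∑ k ∈ Finset.Icc 1 n, g k y)
    (S : ℕ → ℝ)
    (hS : ∀ n, 2 ≤ n →
      S n = (∑ k ∈ Finset.Icc 1 (n - 1), ‖x n - x k‖) / ((n : ℝ) - 1)) :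
    ∀ n, 2 ≤ n →
      ‖x (n + 1) - x n‖ ≤ θ * S n / n +
        1 / ((n : ℝ) * α) * (‖D2F (x n) (x n) - Dg n (x n)‖ +
          ‖((n : ℝ) - 1)⁻¹ •
            ∑ k ∈ Finset.Icc 1 (n - 1), (D2F (x k) (x n) - Dg k (x n))‖) :=
  stmt_11_general X hX D2F α β θ hα hβ hθ hA3 g Dg hgradg hscg x hmem hftl S hS
end

section
/- Let X be a convex subset of a real normed vector space, and let f, f_* : X → ℝ, with f differentiable and α-strongly convex on X and f_* G₂-Lipschitz on X. Let λ ≥ 0, Δ ≥ 0, and ε̃ ∈ ℝ. Suppose x* ∈ X minimizes f over X with f(x*) ≤ ε̃, and suppose x̂ ∈ X satisfies f(x̂) + λ f_*(x̂) ≤ inf_{x∈X} ( f(x) + λ f_*(x) ) + Δ. Then f(x̂) ≤ Δ + ε̃ + λ G₂ ( 2λG₂/α + √(2Δ/α) ). -/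
/-!
Strong convexity and first-order optimality at the minimizer `x*` give quadratic growth
`f y ≥ f x* + (α/2)‖y - x*‖²`. Comparing the near-minimizer `x̂` of `f + λ f_*` with `x*` and
using the Lipschitz bound on `f_*` yields `f x̂ ≤ f x* + Δ + λ G₂ r` with `r = ‖x̂ - x*‖`;
together with quadratic growth this is a quadratic inequality `(α/2) r² ≤ Δ + λ G₂ r`, whence
`r ≤ 2λG₂/α + √(2Δ/α)`.
-/

open Real

theorem mul_sub_half_mul_sq_le_sq_div {α : ℝ} (hα : 0 < α) (a r : ℝ) :
    a * r - α / 2 * r ^ 2 ≤ a ^ 2 / (2 * α) := by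
  rw [le_div_iff₀ (by positivity)]
  nlinarith [sq_nonneg (α * r - a)]

theorem le_two_mul_div_add_sqrt_of_half_mul_sq_le {α a Δ r : ℝ} (hα : 0 < α) (ha : 0 ≤ a)
    (hΔ : 0 ≤ Δ) (hquad : α / 2 * r ^ 2 ≤ Δ + a * r) :
    r ≤ 2 * a / α + √(2 * Δ / α) := by
  set s := √(2 * Δ / α)
  have hs : 0 ≤ s := sqrt_nonneg _
  have hαs : α * s ^ 2 = 2 * Δ := by
    rw [sq_sqrt (by positivity)]; field_simp
  by_contra! h
  have h' : 2 * a < (r - s) * α := by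
    rw [← div_lt_iff₀ hα]; linarith
  have hrs : 0 < r + s := by linarith [div_nonneg (mul_nonneg zero_le_two ha) hα.le]
  nlinarith [mul_lt_mul_of_pos_right h' hrs, mul_nonneg ha hs]

section

variable {E : Type*} [NormedAddCommGroup E] {f g : E → ℝ} {x y : E}

theorem mul_sub_le_mul_norm_of_abs_sub_le {G lam : ℝ} (hlam : 0 ≤ lam)
    (hlip : |g x - g y| ≤ G * ‖x - y‖) : lam * (g x - g y) ≤ lam * G * ‖y - x‖ := by
  rw [mul_assoc, ← norm_sub_rev x y]
  exact mul_le_mul_of_nonneg_left (abs_le.1 hlip).2 hlam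

theorem add_mul_sub_sq_div_le_of_quadratic_growth {α G lam : ℝ} (hα : 0 < α) (hlam : 0 ≤ lam)
    (hgrow : f x + α / 2 * ‖y - x‖ ^ 2 ≤ f y) (hlip : |g x - g y| ≤ G * ‖x - y‖) :
    f x + lam * g x - (lam * G) ^ 2 / (2 * α) ≤ f y + lam * g y := by
  linarith [mul_sub_le_mul_norm_of_abs_sub_le hlam hlip,
    mul_sub_half_mul_sq_le_sq_div hα (lam * G) ‖y - x‖]

variable [NormedSpace ℝ E] {X : Set E} {f' : E →L[ℝ] ℝ}

theorem IsMinOn.hasFDerivWithinAt_nonneg_of_convex (hX : Convex ℝ X) (hmin : IsMinOn f X x)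
    (hf : HasFDerivWithinAt f f' X x) (hx : x ∈ X) (hy : y ∈ X) : 0 ≤ f' (y - x) :=
  hmin.localize.hasFDerivWithinAt_nonneg hf
    (sub_mem_posTangentConeAt_of_segment_subset (hX.segment_subset hx hy))

theorem IsMinOn.add_half_mul_norm_sq_le (hX : Convex ℝ X) (hmin : IsMinOn f X x)
    (hf : HasFDerivWithinAt f f' X x) (hx : x ∈ X) (hy : y ∈ X) {α : ℝ}
    (hsc : f x + f' (y - x) + α / 2 * ‖y - x‖ ^ 2 ≤ f y) :
    f x + α / 2 * ‖y - x‖ ^ 2 ≤ f y := by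
  linarith [hmin.hasFDerivWithinAt_nonneg_of_convex hX hf hx hy]

end

/-- Bias bound for weighted regularization with a possibly negative
regularizer.  If `f` is differentiable and `α`-strongly convex on `X`, `f_*` is
`G₂`-Lipschitz on `X`, `x*` minimizes `f` over `X` with `f(x*) ≤ ε̃`, and `x̂` is
`Δ`-suboptimal for `f + λ f_*` on `X`, then
`f(x̂) ≤ Δ + ε̃ + λ G₂ (2λG₂/α + √(2Δ/α))`. -/
theorem stmt_13
    {E : Type*} [NormedAddCommGroup E] [NormedSpace ℝ E]
    (X : Set E) (hX : Convex ℝ X)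
    (f fs : E → ℝ) (Df : E → (E →L[ℝ] ℝ))
    (α G₂ lam Δ ε : ℝ) (hα : 0 < α) (hG₂ : 0 ≤ G₂) (hlam : 0 ≤ lam) (hΔ : 0 ≤ Δ)
    (hgrad : ∀ y ∈ X, HasFDerivWithinAt f (Df y) X y)
    (hsc : ∀ y ∈ X, ∀ z ∈ X, f z ≥ f y + Df y (z - y) + α / 2 * ‖z - y‖ ^ 2)
    (hlip : ∀ y ∈ X, ∀ z ∈ X, |fs y - fs z| ≤ G₂ * ‖y - z‖)
    (xstar : E) (hxs : xstar ∈ X)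
    (hmin : ∀ y ∈ X, f xstar ≤ f y) (hval : f xstar ≤ ε)
    (xhat : E) (hxhat : xhat ∈ X)
    (hnear : f xhat + lam * fs xhat ≤
      sInf ((fun y => f y + lam * fs y) '' X) + Δ) :
    f xhat ≤ Δ + ε + lam * G₂ * (2 * lam * G₂ / α + Real.sqrt (2 * Δ / α)) := by
  have hgrow : ∀ y ∈ X, f xstar + α / 2 * ‖y - xstar‖ ^ 2 ≤ f y := fun y hy =>
    (isMinOn_iff.2 hmin).add_half_mul_norm_sq_le hX (hgrad xstar hxs) hxs hy
      (hsc xstar hxs y hy)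
  -- without this, `sInf` could be the junk value `0` of an unbounded set
  have hbdd : BddBelow ((fun y => f y + lam * fs y) '' X) := by
    refine ⟨f xstar + lam * fs xstar - (lam * G₂) ^ 2 / (2 * α), ?_⟩
    rintro _ ⟨y, hy, rfl⟩
    exact add_mul_sub_sq_div_le_of_quadratic_growth hα hlam (hgrow y hy) (hlip xstar hxs y hy)
  have hlG : 0 ≤ lam * G₂ := mul_nonneg hlam hG₂
  have hup : f xhat ≤ f xstar + Δ + lam * G₂ * ‖xhat - xstar‖ := by
    linarith [csInf_le hbdd ⟨xstar, hxs, rfl⟩,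
      mul_sub_le_mul_norm_of_abs_sub_le hlam (hlip xstar hxs xhat hxhat)]
  have hr : ‖xhat - xstar‖ ≤ 2 * lam * G₂ / α + √(2 * Δ / α) := by
    rw [mul_assoc 2]
    exact le_two_mul_div_add_sqrt_of_half_mul_sq_le hα hlG hΔ
      (by linarith [hgrow xhat hxhat])
  linarith [mul_le_mul_of_nonneg_left hr hlG]
end

section
/- Let X be a convex subset of a real normed vector space and let f : X → ℝ be differentiable and α-strongly convex on X with minimizer x* ∈ X. Let λ, G₂, Δ ≥ 0. If x̂ ∈ X satisfies f(x̂) − f(x*) ≤ Δ + λ G₂ ‖x̂ − x*‖, then ‖x̂ − x*‖ ≤ (2λG₂ + √(2αΔ))/α. -/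
/-- Distance bound from an approximate optimality inequality.
If `f` is differentiable and `α`-strongly convex on the convex set `X` with minimizer
`x*`, and `x̂ ∈ X` satisfies `f(x̂) − f(x*) ≤ Δ + λ G₂ ‖x̂ − x*‖`, then
`‖x̂ − x*‖ ≤ (2λG₂ + √(2αΔ))/α`. -/
theorem stmt_14
    {E : Type*} [NormedAddCommGroup E] [NormedSpace ℝ E]
    (X : Set E) (hX : Convex ℝ X)
    (f : E → ℝ) (Df : E → (E →L[ℝ] ℝ))
    (α G₂ lam Δ : ℝ) (hα : 0 < α) (hG₂ : 0 ≤ G₂) (hlam : 0 ≤ lam) (hΔ : 0 ≤ Δ)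
    (hgrad : ∀ y ∈ X, HasFDerivWithinAt f (Df y) X y)
    (hsc : ∀ y ∈ X, ∀ z ∈ X, f z ≥ f y + Df y (z - y) + α / 2 * ‖z - y‖ ^ 2)
    (xstar : E) (hxs : xstar ∈ X) (hmin : ∀ y ∈ X, f xstar ≤ f y)
    (xhat : E) (hxhat : xhat ∈ X)
    (hineq : f xhat - f xstar ≤ Δ + lam * G₂ * ‖xhat - xstar‖) :
    ‖xhat - xstar‖ ≤ (2 * lam * G₂ + Real.sqrt (2 * α * Δ)) / α := by
  set r : ℝ := ‖xhat - xstar‖ with hr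
  have hr0 : 0 ≤ r := norm_nonneg _
  -- Step 1: quadratic growth  α/2 * r^2 ≤ f x̂ - f x*
  have key : ∀ t ∈ Set.Ioo (0:ℝ) 1,
      α / 2 * (1 - t) * r ^ 2 ≤ f xhat - f xstar := by
    intro t ht
    obtain ⟨ht0, ht1⟩ := ht
    have h1t : (0:ℝ) < 1 - t := by linarith
    set z : E := xstar + t • (xhat - xstar) with hz
    have hzX : z ∈ X := by
      have := hX hxs hxhat (by linarith : (0:ℝ) ≤ 1 - t) ht0.le (by ring)
      have hzeq : (1 - t) • xstar + t • xhat = z := by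
        rw [hz]; module
      rwa [hzeq] at this
    set g : ℝ := Df z (xhat - xstar) with hg
    have e1 : xstar - z = (-t) • (xhat - xstar) := by
      rw [hz, neg_smul]; abel
    have e2 : xhat - z = (1 - t) • (xhat - xstar) := by
      rw [hz, sub_smul, one_smul]; abel
    have h1 := hsc z hzX xstar hxs
    have h2 := hsc z hzX xhat hxhat
    rw [e1] at h1
    rw [e2] at h2
    rw [map_smul, norm_smul, Real.norm_eq_abs, abs_neg, abs_of_nonneg ht0.le] at h1
    rw [map_smul, norm_smul, Real.norm_eq_abs, abs_of_nonneg h1t.le] at h2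
    simp only [smul_eq_mul, ← hg, ← hr] at h1 h2
    have hm := hmin z hzX
    have c1 : 0 ≤ (1 - t) * (f xstar - f z + t * g - α / 2 * (t * r) ^ 2) :=
      mul_nonneg h1t.le (by linarith)
    have c2 : 0 ≤ t * (f xhat - f z - (1 - t) * g - α / 2 * ((1 - t) * r) ^ 2) :=
      mul_nonneg ht0.le (by linarith)
    have c3 : t * (α / 2 * (1 - t) * r ^ 2) ≤ t * (f xhat - f xstar) := by nlinarith [c1, c2, hm]
    exact le_of_mul_le_mul_left c3 ht0
  have growth : α / 2 * r ^ 2 ≤ f xhat - f xstar := by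
    have hlim : Filter.Tendsto (fun t : ℝ => α / 2 * (1 - t) * r ^ 2)
        (nhdsWithin 0 (Set.Ioi 0)) (nhds (α / 2 * r ^ 2)) := by
      have hc : Continuous fun t : ℝ => α / 2 * (1 - t) * r ^ 2 := by continuity
      have h := hc.tendsto 0
      simpa using h.mono_left nhdsWithin_le_nhds
    refine le_of_tendsto hlim ?_
    filter_upwards [Ioo_mem_nhdsGT_of_mem (Set.mem_Ico.2 ⟨le_refl 0, one_pos⟩)] with t ht
    exact key t ht
  -- Step 2: solve the quadratic inequality
  have hq : α * r ^ 2 ≤ 2 * lam * G₂ * r + 2 * Δ := by nlinarith [growth, hineq]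
  set s : ℝ := Real.sqrt (2 * α * Δ) with hs
  have hs0 : 0 ≤ s := Real.sqrt_nonneg _
  have hs2 : s ^ 2 = 2 * α * Δ := Real.sq_sqrt (by positivity)
  by_contra hcon
  push_neg at hcon
  rw [div_lt_iff₀ hα] at hcon
  have hcg : 0 ≤ 2 * lam * G₂ := by positivity
  have hu : 0 < α * r := by nlinarith [hcon, hcg, hs0]
  have k1 : α * (α * r ^ 2) ≤ α * (2 * lam * G₂ * r + 2 * Δ) :=
    mul_le_mul_of_nonneg_left hq hα.le
  have k2 : 0 ≤ s * (r * α - s) := mul_nonneg hs0 (by nlinarith [hcon, hcg])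
  have k3 : 0 < (α * r) * (r * α - (2 * lam * G₂ + s)) :=
    mul_pos hu (by linarith)
  nlinarith [k1, k2, k3, hs2]
end

section
/- Let X be a convex subset of a real normed vector space with norm ‖·‖ and dual norm ‖·‖_*. Let φ₁ : X → ℝ be convex with a minimizer x₁ ∈ argmin_{x∈X} φ₁(x), let ψ : X → ℝ, and suppose φ₂ := φ₁ + ψ is α-strongly convex on X with minimizer x₂ ∈ argmin_{x∈X} φ₂(x). Let g be a subgradient of ψ at x₁ (i.e., ψ(y) ≥ ψ(x₁) + ⟨g, y − x₁⟩ for all y ∈ X). Then ‖x₁ − x₂‖ ≤ ‖g‖_*/α, and for every x' ∈ X, φ₂(x₁) − φ₂(x') ≤ ‖g‖_*²/(2α). -/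
/-- Strong subgradient inequality: if `f` is `α`-strongly convex on `X` and `g`
is a subgradient of `f` at `x ∈ X`, then the subgradient inequality holds with
the extra quadratic term. -/
theorem stmt_15_aux {E : Type*} [NormedAddCommGroup E] [NormedSpace ℝ E]
    {X : Set E} {f : E → ℝ} {α : ℝ}
    (hf : StrongConvexOn X α f) {x : E} (hx : x ∈ X)
    (g : E →L[ℝ] ℝ) (hg : ∀ y ∈ X, f y ≥ f x + g (y - x)) :
    ∀ y ∈ X, f x + g (y - x) + α / 2 * ‖y - x‖ ^ 2 ≤ f y := by
  intro y hy
  have hK0 : (0:ℝ) ≤ ‖y - x‖ ^ 2 := sq_nonneg _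
  have key : ∀ t : ℝ, 0 < t → t ≤ 1 →
      g (y - x) + α / 2 * ‖y - x‖ ^ 2 - t * (α / 2 * ‖y - x‖ ^ 2) ≤ f y - f x := by
    intro t ht ht1
    have ha : (0:ℝ) ≤ 1 - t := by linarith
    have hcomb := hf.2 hx hy ha ht.le (by ring)
    have hmem : (1 - t) • x + t • y ∈ X := hf.1 hx hy ha ht.le (by ring)
    have hsub := hg _ hmem
    have harg : (1 - t) • x + t • y - x = t • (y - x) := by module
    rw [harg, map_smul] at hsub
    have hnorm : ‖x - y‖ = ‖y - x‖ := norm_sub_rev _ _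
    simp only [smul_eq_mul, hnorm] at hcomb hsub
    nlinarith [hcomb, hsub]
  have hA : g (y - x) + α / 2 * ‖y - x‖ ^ 2 - (f y - f x) ≤ 0 := by
    by_contra h
    push_neg at h
    have h1 := key 1 one_pos le_rfl
    have hKpos : 0 < α / 2 * ‖y - x‖ ^ 2 := by nlinarith
    set A : ℝ := g (y - x) + α / 2 * ‖y - x‖ ^ 2 - (f y - f x) with hAdef
    clear_value A
    have ht2 : A / 2 / (α / 2 * ‖y - x‖ ^ 2) ≤ 1 := by
      rw [div_le_one hKpos]; linarith
    have ht1 : 0 < A / 2 / (α / 2 * ‖y - x‖ ^ 2) := by positivity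
    have hk := key (A / 2 / (α / 2 * ‖y - x‖ ^ 2)) ht1 ht2
    rw [div_mul_cancel₀ _ (ne_of_gt hKpos)] at hk
    linarith
  linarith

/-- Perturbation lemma, Lemma from convex analysis.
Let `φ₁` be convex on `X` with minimizer `x₁`, let `φ₂ = φ₁ + ψ` be `α`-strongly
convex on `X` with minimizer `x₂`, and let `g` be a subgradient of `ψ` at `x₁`.
Then `‖x₁ − x₂‖ ≤ ‖g‖_*/α` and `φ₂(x₁) − φ₂(x') ≤ ‖g‖_*²/(2α)` for every `x' ∈ X`. -/
theorem stmt_15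
    {E : Type*} [NormedAddCommGroup E] [NormedSpace ℝ E]
    (X : Set E) (hX : Convex ℝ X)
    (φ₁ ψ : E → ℝ) (α : ℝ) (hα : 0 < α)
    (hconv : ConvexOn ℝ X φ₁)
    (x₁ : E) (hx₁ : x₁ ∈ X) (hmin₁ : ∀ y ∈ X, φ₁ x₁ ≤ φ₁ y)
    (hφ₂ : StrongConvexOn X α (fun x => φ₁ x + ψ x))
    (x₂ : E) (hx₂ : x₂ ∈ X)
    (hmin₂ : ∀ y ∈ X, φ₁ x₂ + ψ x₂ ≤ φ₁ y + ψ y)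
    (g : E →L[ℝ] ℝ) (hg : ∀ y ∈ X, ψ y ≥ ψ x₁ + g (y - x₁)) :
    ‖x₁ - x₂‖ ≤ ‖g‖ / α ∧
      ∀ x' ∈ X, (φ₁ x₁ + ψ x₁) - (φ₁ x' + ψ x') ≤ ‖g‖ ^ 2 / (2 * α) := by
  -- 0 is a subgradient of φ₂ at x₂
  have aux0 := stmt_15_aux hφ₂ hx₂ (0 : E →L[ℝ] ℝ)
    (fun y hy => by simpa using hmin₂ y hy)
  -- g is a subgradient of φ₂ at x₁
  have auxg := stmt_15_aux hφ₂ hx₁ g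
    (fun y hy => by
      have h1 := hmin₁ y hy
      have h2 := hg y hy
      simp only [ge_iff_le]
      linarith)
  have hgle : ∀ z : E, g z ≤ ‖g‖ * ‖z‖ := fun z =>
    le_trans (le_abs_self _) ((Real.norm_eq_abs (g z)) ▸ g.le_opNorm z)
  constructor
  · -- distance bound
    have h0 := aux0 x₁ hx₁
    have hgx := auxg x₂ hx₂
    simp only [ContinuousLinearMap.zero_apply, add_zero] at h0
    have hnorm : ‖x₂ - x₁‖ = ‖x₁ - x₂‖ := norm_sub_rev _ _
    rw [hnorm] at hgx
    have hd0 : (0:ℝ) ≤ ‖x₁ - x₂‖ := norm_nonneg _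
    have hgb : g (x₁ - x₂) ≤ ‖g‖ * ‖x₁ - x₂‖ := hgle _
    have hgrev : g (x₂ - x₁) = - g (x₁ - x₂) := by
      rw [← map_neg]; congr 1; abel
    have hsum : α * ‖x₁ - x₂‖ ^ 2 ≤ ‖g‖ * ‖x₁ - x₂‖ := by
      nlinarith [h0, hgx]
    rcases eq_or_lt_of_le hd0 with h | h
    · rw [← h]; positivity
    · rw [le_div_iff₀ hα]
      nlinarith [mul_le_mul_of_nonneg_right hsum (le_of_lt h)]
  · intro x' hx'
    have h := auxg x' hx'
    have ht0 : (0:ℝ) ≤ ‖x' - x₁‖ := norm_nonneg _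
    have hgb : - g (x' - x₁) ≤ ‖g‖ * ‖x' - x₁‖ := by
      have h1 : g (x₁ - x') ≤ ‖g‖ * ‖x₁ - x'‖ := hgle _
      rw [norm_sub_rev] at h1
      have heq : g (x₁ - x') = - g (x' - x₁) := by rw [← map_neg]; congr 1; abel
      linarith [heq ▸ h1]
    rw [le_div_iff₀ (by positivity : (0:ℝ) < 2 * α)]
    nlinarith [sq_nonneg (‖g‖ - α * ‖x' - x₁‖), h, hgb, hα]
end
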